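/- arXiv:2604.23015 — 9 statements merged into one kernel-verified Lean document; each statement's English description precedes it below -/
import Mathlib

section
/- Let B > 0 and let J be a finite set of items with costs cost : J → (0, B]. Suppose a greedy first-fit algorithm partitions J into bins S_1, …, S_m (processing items in some order, placing each item into the first bin with enough remaining capacity, opening a new bin otherwise, each bin having capacity B). Let ε = (1/B)·max_{j∈J} cost(j) and ε' = min(1/2, ε), and let ε_min = (1/B)·min_{j∈J} cost(j). Then the total cost satisfies Σ_{j∈J} cost(j) ≥ (m − 1)·(B − ε'·B) + ε_min·B. -/
/-- A first-fit packing (encoded by its defining structural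
property: every item in a later bin does not fit into any earlier bin) of a
finite set `J` of items with costs in `(0, B]` into bins `S 0, …, S (m-1)`
satisfies `Σ cost ≥ (m − 1)(B − ε'B) + ε_min B`, where
`ε = (1/B)·max cost`, `ε' = min (1/2) ε`, `ε_min = (1/B)·min cost`. -/
theorem stmt0 {α : Type*} [DecidableEq α] (B : ℝ) (hB : 0 < B)
    (J : Finset α) (hJ : J.Nonempty) (cost : α → ℝ)
    (hcost : ∀ j ∈ J, 0 < cost j ∧ cost j ≤ B)
    (m : ℕ) (S : Fin m → Finset α)
    (hpart : ∀ j ∈ J, ∃! i, j ∈ S i)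
    (hsub : ∀ i, S i ⊆ J)
    (hne : ∀ i, (S i).Nonempty)
    (hbud : ∀ i, (S i).sum cost ≤ B)
    (hff : ∀ i' i'' : Fin m, i' < i'' → ∀ x ∈ S i'',
      (S i').sum cost + cost x > B) :
    ((m : ℝ) - 1) * (B - (min (1/2) ((1/B) * J.sup' hJ cost)) * B)
      + ((1/B) * J.inf' hJ cost) * B ≤ J.sum cost := by
  have hm : 0 < m := by
    obtain ⟨j, hj⟩ := hJ
    obtain ⟨i, -, -⟩ := hpart j hj
    exact i.pos
  set M := J.sup' hJ cost with hMdef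
  set L := J.inf' hJ cost with hLdef
  set T := B - (min (1/2) ((1/B) * M)) * B with hTdef
  have hT : T ≤ max (B/2) (B - M) := by
    rcases le_total (1/2) ((1/B) * M) with h | h
    · rw [hTdef, min_eq_left h]
      exact le_trans (by linarith) (le_max_left _ _)
    · rw [hTdef, min_eq_right h]
      have hMB : (1/B) * M * B = M := by field_simp
      rw [hMB]; exact le_max_right _ _
  have hLB : (1/B) * L * B = L := by field_simp
  have hLsum : ∀ i, L ≤ (S i).sum cost := by
    intro i
    obtain ⟨x, hx⟩ := hne i
    have h1 : L ≤ cost x := Finset.inf'_le cost (hsub i hx)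
    have h2 : cost x ≤ (S i).sum cost :=
      Finset.single_le_sum (fun y hy => (hcost y (hsub i hy)).1.le) hx
    linarith
  have hcostsum : ∀ i, ∀ x ∈ S i, cost x ≤ (S i).sum cost := by
    intro i x hx
    exact Finset.single_le_sum (fun y hy => (hcost y (hsub i hy)).1.le) hx
  have hsum : J.sum cost = ∑ i : Fin m, (S i).sum cost := by
    have hJeq : J = Finset.univ.biUnion S := by
      ext j
      simp only [Finset.mem_biUnion, Finset.mem_univ, true_and]
      constructor
      · intro hj; obtain ⟨i, hi, -⟩ := hpart j hj; exact ⟨i, hi⟩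
      · rintro ⟨i, hi⟩; exact hsub i hi
    rw [hJeq]
    refine Finset.sum_biUnion ?_
    intro i _ i' _ hne'
    refine Finset.disjoint_left.mpr fun a ha ha' => hne' ?_
    obtain ⟨u, -, hu⟩ := hpart a (hsub i ha)
    exact (hu i ha).trans (hu i' ha').symm
  have key : ∃ i0 : Fin m, ∀ i, i ≠ i0 → T ≤ (S i).sum cost := by
    by_cases hbad : ∃ i, (S i).sum cost < B/2
    · obtain ⟨i0, hi0⟩ := hbad
      refine ⟨i0, fun i hi => ?_⟩
      rcases hi.lt_or_gt with hlt | hgt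
      · obtain ⟨x, hx⟩ := hne i0
        have h1 := hff i i0 hlt x hx
        have h2 : cost x ≤ M := Finset.le_sup' cost (hsub i0 hx)
        have h3 : cost x ≤ (S i0).sum cost := hcostsum i0 x hx
        refine le_trans hT (max_le (by linarith) (by linarith))
      · obtain ⟨x, hx⟩ := hne i
        have h1 := hff i0 i hgt x hx
        have h2 : cost x ≤ M := Finset.le_sup' cost (hsub i hx)
        have h3 : cost x ≤ (S i).sum cost := hcostsum i x hx
        have hmax : max (B/2) (B - M) = B/2 := max_eq_left (by linarith)
        rw [hmax] at hT
        have hhalf : B/2 < cost x := by linarith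
        exact le_trans hT (le_trans hhalf.le h3)
    · push_neg at hbad
      refine ⟨⟨m-1, by omega⟩, fun i hi => ?_⟩
      have hlt : i < (⟨m-1, by omega⟩ : Fin m) := by
        have h1 := i.isLt
        have h2 : i.val ≠ m - 1 := fun h => hi (Fin.ext h)
        have h3 : (⟨m-1, by omega⟩ : Fin m).val = m - 1 := rfl
        exact Fin.lt_def.mpr (by omega)
      obtain ⟨x, hx⟩ := hne ⟨m-1, by omega⟩
      have h1 := hff i _ hlt x hx
      have h2 : cost x ≤ M := Finset.le_sup' cost (hsub _ hx)
      exact le_trans hT (max_le (hbad i) (by linarith))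
  obtain ⟨i0, hi0⟩ := key
  have hcount : (Finset.univ.erase i0).card = m - 1 := by
    rw [Finset.card_erase_of_mem (Finset.mem_univ i0), Finset.card_univ, Fintype.card_fin]
  have hsum2 : ((m - 1 : ℕ) : ℝ) * T ≤ ∑ i ∈ Finset.univ.erase i0, (S i).sum cost := by
    have := Finset.card_nsmul_le_sum (Finset.univ.erase i0) (fun i => (S i).sum cost) T
      (fun i hi => hi0 i (Finset.ne_of_mem_erase hi))
    rwa [hcount, nsmul_eq_mul] at this
  have hsplit : (∑ i ∈ Finset.univ.erase i0, (S i).sum cost) + (S i0).sum cost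
      = ∑ i : Fin m, (S i).sum cost :=
    Finset.sum_erase_add _ _ (Finset.mem_univ i0)
  have hcast : ((m - 1 : ℕ) : ℝ) = (m : ℝ) - 1 := by
    rw [Nat.cast_sub hm]; norm_num
  rw [hLB, hsum, ← hsplit]
  rw [hcast] at hsum2
  have := hLsum i0
  linarith
end

section
/- Let J be a finite multiset of items with costs in (0, B]. Let m be the number of bins produced by First-Fit Decreasing (FFD) applied to J, and let OPT be the minimum number of capacity-B bins needed to pack J. If there exists a bin S_i in the FFD solution and a bin T_j in some optimal solution such that cost(S_i) > cost(T_j), then m ≤ (3/2)·OPT − 1/2. -/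
/-- Insert an item into the first bin with enough remaining capacity. -/
noncomputable def ffInsert (B : ℝ) (x : ℝ) : List (List ℝ) → List (List ℝ)
  | [] => [[x]]
  | b :: bs => if b.sum + x ≤ B then (x :: b) :: bs else b :: ffInsert B x bs

/-- First-fit bin packing of a list of item costs with capacity `B`. -/
noncomputable def firstFit (B : ℝ) (items : List ℝ) : List (List ℝ) :=
  items.foldl (fun bins x => ffInsert B x bins) []

/-- First-Fit Decreasing: first-fit applied to the items sorted in
non-increasing order of cost. -/
noncomputable def FFD (B : ℝ) (items : List ℝ) : List (List ℝ) :=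
  firstFit B (items.mergeSort (fun a b => decide (b ≤ a)))

/-- A packing of the multiset of items into capacity-`B` bins. -/
def IsPacking (B : ℝ) (items : List ℝ) (P : List (List ℝ)) : Prop :=
  P.flatten.Perm items ∧ ∀ b ∈ P, b.sum ≤ B

namespace FFDProof

/-- the "first-fit" relation between an earlier bin `b` and a later item-holder `c`. -/
def R (B : ℝ) (b c : List ℝ) : Prop :=
  ∀ y ∈ c, B < y + (b.filter (fun z => y ≤ z)).sum

lemma ffInsert_flatten_perm (B x : ℝ) (bins : List (List ℝ)) :
    (ffInsert B x bins).flatten.Perm (x :: bins.flatten) := by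
  induction bins with
  | nil => simp [ffInsert]
  | cons b bs ih =>
    by_cases h : b.sum + x ≤ B
    · simp [ffInsert, h]
    · simp only [ffInsert, if_neg h, List.flatten_cons]
      exact (ih.append_left b).trans List.perm_middle

lemma ffInsert_mem (B x : ℝ) (bins : List (List ℝ)) {c : List ℝ}
    (hc : c ∈ ffInsert B x bins) :
    c ∈ bins ∨ c = [x] ∨ ∃ b ∈ bins, b.sum + x ≤ B ∧ c = x :: b := by
  induction bins with
  | nil => simp [ffInsert] at hc; tauto
  | cons b bs ih =>
    by_cases h : b.sum + x ≤ B
    · simp only [ffInsert, if_pos h, List.mem_cons] at hc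
      rcases hc with rfl | hc
      · exact Or.inr (Or.inr ⟨b, by simp, h, rfl⟩)
      · exact Or.inl (List.mem_cons_of_mem _ hc)
    · simp only [ffInsert, if_neg h, List.mem_cons] at hc
      rcases hc with rfl | hc
      · exact Or.inl List.mem_cons_self
      · rcases ih hc with h1 | h1 | ⟨b', hb', h2, h3⟩
        · exact Or.inl (List.mem_cons_of_mem _ h1)
        · exact Or.inr (Or.inl h1)
        · exact Or.inr (Or.inr ⟨b', List.mem_cons_of_mem _ hb', h2, h3⟩)


variable {B : ℝ}

lemma ffInsert_bin_prop {x : ℝ} (hx0 : 0 < x) (hxB : x ≤ B) {bins : List (List ℝ)}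
    (h : ∀ b ∈ bins, b ≠ [] ∧ b.sum ≤ B ∧ ∀ z ∈ b, 0 < z ∧ z ≤ B) :
    ∀ c ∈ ffInsert B x bins, c ≠ [] ∧ c.sum ≤ B ∧ ∀ z ∈ c, 0 < z ∧ z ≤ B := by
  intro c hc
  rcases ffInsert_mem B x bins hc with h1 | rfl | ⟨b, hb, hfit, rfl⟩
  · exact h c h1
  · refine ⟨by simp, by simpa using hxB, by simp [hx0, hxB]⟩
  · refine ⟨by simp, by simpa [add_comm] using hfit, ?_⟩
    intro z hz
    rcases List.mem_cons.mp hz with rfl | hz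
    · exact ⟨hx0, hxB⟩
    · exact (h b hb).2.2 z hz

lemma ffInsert_pairwise {x : ℝ} (hx0 : 0 < x) {bins : List (List ℝ)}
    (hall : ∀ b ∈ bins, ∀ z ∈ b, x ≤ z)
    (hpw : bins.Pairwise (R B)) : (ffInsert B x bins).Pairwise (R B) := by
  induction bins with
  | nil => simp [ffInsert, R]
  | cons b bs ih =>
    rw [List.pairwise_cons] at hpw
    obtain ⟨hRb, hbs⟩ := hpw
    by_cases h : b.sum + x ≤ B
    · simp only [ffInsert, if_pos h]
      rw [List.pairwise_cons]
      refine ⟨?_, hbs⟩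
      intro c hc y hy
      have h1 := hRb c hc y hy
      have h2 : ((x :: b).filter (fun z => decide (y ≤ z))).sum
          ≥ (b.filter (fun z => decide (y ≤ z))).sum := by
        by_cases hyx : y ≤ x
        · simp only [List.filter_cons, decide_eq_true_eq, if_pos hyx, List.sum_cons]
          linarith
        · simp only [List.filter_cons, decide_eq_true_eq, if_neg hyx]
          exact le_rfl
      linarith
    · simp only [ffInsert, if_neg h]
      rw [List.pairwise_cons]
      have hRbx : R B b [x] := by
        intro y hy
        rcases List.mem_singleton.mp hy with rfl
        have : b.filter (fun z => decide (y ≤ z)) = b :=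
          List.filter_eq_self.mpr (fun z hz => decide_eq_true (hall b (by simp) z hz))
        rw [this]
        linarith [not_le.mp h]
      refine ⟨?_, ih (fun b' hb' => hall b' (by simp [hb'])) hbs⟩
      intro c hc
      rcases ffInsert_mem B x bs hc with h1 | rfl | ⟨b', hb', hfit, rfl⟩
      · exact hRb c h1
      · exact hRbx
      · intro y hy
        rcases List.mem_cons.mp hy with rfl | hy
        · exact hRbx y (by simp)
        · exact hRb b' hb' y hy

/-- full invariant of the first-fit state -/
def Inv (B : ℝ) (bins : List (List ℝ)) : Prop :=
  bins.Pairwise (R B) ∧ ∀ b ∈ bins, b ≠ [] ∧ b.sum ≤ B ∧ ∀ z ∈ b, 0 < z ∧ z ≤ B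

lemma foldl_flatten_perm (l : List ℝ) (bins : List (List ℝ)) :
    (l.foldl (fun bins x => ffInsert B x bins) bins).flatten.Perm (l ++ bins.flatten) := by
  induction l generalizing bins with
  | nil => simp
  | cons x l ih =>
    simp only [List.foldl_cons, List.cons_append]
    exact (ih _).trans ((((ffInsert_flatten_perm B x bins)).append_left l).trans
      List.perm_middle)

lemma foldl_inv (l : List ℝ) (bins : List (List ℝ))
    (hsort : l.Pairwise (fun a b => b ≤ a))
    (hl : ∀ y ∈ l, 0 < y ∧ y ≤ B)
    (hinv : Inv B bins)
    (hall : ∀ y ∈ l, ∀ b ∈ bins, ∀ z ∈ b, y ≤ z) :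
    Inv B (l.foldl (fun bins x => ffInsert B x bins) bins) := by
  induction l generalizing bins with
  | nil => simpa using hinv
  | cons x l ih =>
    rw [List.pairwise_cons] at hsort
    simp only [List.foldl_cons]
    refine ih _ hsort.2 (fun y hy => hl y (List.mem_cons_of_mem _ hy)) ?_ ?_
    · exact ⟨ffInsert_pairwise (hl x (by simp)).1
        (fun b hb z hz => hall x (by simp) b hb z hz) hinv.1,
        ffInsert_bin_prop (hl x (by simp)).1 (hl x (by simp)).2 hinv.2⟩
    · intro y hy b hb z hz
      have hzmem : z ∈ (ffInsert B x bins).flatten := List.mem_flatten.mpr ⟨b, hb, hz⟩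
      have := (ffInsert_flatten_perm B x bins).mem_iff.mp hzmem
      rcases List.mem_cons.mp this with rfl | hzold
      · exact hsort.1 y hy
      · obtain ⟨b', hb', hz'⟩ := List.mem_flatten.mp hzold
        exact hall y (List.mem_cons_of_mem _ hy) b' hb' z hz'

theorem FFD_inv (items : List ℝ) (hitems : ∀ x ∈ items, 0 < x ∧ x ≤ B) :
    Inv B (FFD B items) ∧ (FFD B items).flatten.Perm items := by
  have hperm : (items.mergeSort (fun a b => decide (b ≤ a))).Perm items :=
    List.mergeSort_perm items _
  have hsort : (items.mergeSort (fun a b => decide (b ≤ a))).Pairwise (fun a b => b ≤ a) := by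
    have := List.pairwise_mergeSort (le := fun a b : ℝ => decide (b ≤ a))
      (fun a b c h₁ h₂ => by simp at *; linarith)
      (fun a b => by simpa using le_total b a) items
    simpa using this
  constructor
  · exact foldl_inv _ [] hsort (fun y hy => hitems y (hperm.mem_iff.mp hy))
      ⟨by simp, by simp⟩ (by simp)
  · exact ((foldl_flatten_perm _ []).trans (by simp)).trans hperm



lemma sum_le_card_mul (l : List ℝ) (c : ℝ) (h : ∀ x ∈ l, x ≤ c) :
    l.sum ≤ l.length * c := by
  induction l with
  | nil => simp
  | cons x l ih =>
    simp only [List.sum_cons, List.length_cons]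
    have := ih (fun y hy => h y (List.mem_cons_of_mem _ hy))
    have := h x (by simp)
    push_cast
    linarith

lemma card_mul_le_sum (l : List ℝ) (c : ℝ) (h : ∀ x ∈ l, c ≤ x) :
    l.length * c ≤ l.sum := by
  induction l with
  | nil => simp
  | cons x l ih =>
    simp only [List.sum_cons, List.length_cons]
    have := ih (fun y hy => h y (List.mem_cons_of_mem _ hy))
    have := h x (by simp)
    push_cast
    linarith

lemma card_mul_lt_sum (l : List ℝ) (c : ℝ) (hne : l ≠ []) (h : ∀ x ∈ l, c < x) :
    l.length * c < l.sum := by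
  cases l with
  | nil => simp at hne
  | cons x l =>
    simp only [List.sum_cons, List.length_cons]
    have h1 := card_mul_le_sum l c (fun y hy => (h y (List.mem_cons_of_mem _ hy)).le)
    have := h x (by simp)
    push_cast
    linarith

lemma pair_sum_le (A Y : List ℝ) (c : ℝ) (hlen : A.length = Y.length)
    (h : ∀ a ∈ A, ∀ y ∈ Y, c < a + y) :
    A.length * c ≤ A.sum + Y.sum := by
  induction A generalizing Y with
  | nil => simp [List.length_eq_zero_iff.mp hlen.symm]
  | cons a A ih =>
    cases Y with
    | nil => simp at hlen
    | cons y Y =>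
      simp only [List.length_cons, Nat.succ_inj] at hlen
      have h1 := ih Y hlen
        (fun a' ha' y' hy' => h a' (List.mem_cons_of_mem _ ha') y' (List.mem_cons_of_mem _ hy'))
      have h2 := h a (by simp) y (by simp)
      simp only [List.sum_cons, List.length_cons]
      push_cast
      linarith

lemma pair_sum_lt (A Y : List ℝ) (c : ℝ) (hne : A ≠ []) (hlen : A.length = Y.length)
    (h : ∀ a ∈ A, ∀ y ∈ Y, c < a + y) :
    A.length * c < A.sum + Y.sum := by
  cases A with
  | nil => simp at hne
  | cons a A =>
    cases Y with
    | nil => simp at hlen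
    | cons y Y =>
      simp only [List.length_cons, Nat.succ_inj] at hlen
      have h1 := pair_sum_le A Y c hlen
        (fun a' ha' y' hy' => h a' (List.mem_cons_of_mem _ ha') y' (List.mem_cons_of_mem _ hy'))
      have h2 := h a (by simp) y (by simp)
      simp only [List.sum_cons, List.length_cons]
      push_cast
      linarith

/-- a capacity bound on the number of elements of a bin exceeding `c` -/
lemma bin_countP_le {B c : ℝ} (p : ℝ → Bool) (t : List ℝ) (ht : t.sum ≤ B)
    (hpos : ∀ z ∈ t, 0 < z) (hc : ∀ z ∈ t, p z → c < z) (k : ℕ)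
    (hck : B ≤ (k + 1) * c) (hc0 : 0 ≤ c) : t.countP p ≤ k := by
  by_contra hcon
  push_neg at hcon
  have hlen : k + 1 ≤ (t.filter p).length := by
    simpa [← List.countP_eq_length_filter] using hcon
  have hne : t.filter p ≠ [] := by
    intro h0
    rw [h0] at hlen
    simp at hlen
  have h1 : ((t.filter p).length : ℝ) * c < (t.filter p).sum :=
    card_mul_lt_sum _ c hne
      (fun z hz => hc z (List.mem_of_mem_filter hz) (List.of_mem_filter hz))
  have h2 : (t.filter p).sum ≤ t.sum :=
    List.Sublist.sum_le_sum (List.filter_sublist (l := t)) (fun z hz => (hpos z hz).le)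
  have h3 : ((k : ℝ) + 1) * c ≤ ((t.filter p).length : ℝ) * c := by
    apply mul_le_mul_of_nonneg_right _ hc0
    exact_mod_cast hlen
  linarith

lemma countP_transfer (L : List (List ℝ)) (p q : ℝ → Bool)
    (h1 : ∀ t ∈ L, t.countP p ≤ 1)
    (h2 : ∀ t ∈ L, 1 ≤ t.countP p → 1 ≤ t.countP q) :
    L.flatten.countP p ≤ L.flatten.countP q := by
  induction L with
  | nil => simp
  | cons t L ih =>
    have ihh := ih (fun u hu => h1 u (List.mem_cons_of_mem _ hu))
      (fun u hu => h2 u (List.mem_cons_of_mem _ hu))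
    simp only [List.flatten_cons, List.countP_append]
    rcases Nat.lt_or_ge (t.countP p) 1 with hlt | hge
    · have : t.countP p = 0 := by omega
      omega
    · have := h1 t (by simp)
      have := h2 t (by simp) hge
      omega

lemma flatten_countP_le (L : List (List ℝ)) (p : ℝ → Bool) (k : ℕ)
    (h : ∀ t ∈ L, t.countP p ≤ k) :
    L.flatten.countP p ≤ k * L.length := by
  induction L with
  | nil => simp
  | cons t L ih =>
    have := h t (by simp)
    have := ih (fun u hu => h u (List.mem_cons_of_mem _ hu))
    simp only [List.flatten_cons, List.countP_append, List.length_cons, Nat.mul_succ]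
    omega

lemma le_flatten_countP (L : List (List ℝ)) (p : ℝ → Bool)
    (h : ∀ t ∈ L, 1 ≤ t.countP p) :
    L.length ≤ L.flatten.countP p := by
  induction L with
  | nil => simp
  | cons t L ih =>
    have := h t (by simp)
    have := ih (fun u hu => h u (List.mem_cons_of_mem _ hu))
    simp only [List.flatten_cons, List.countP_append, List.length_cons]
    omega

variable {B : ℝ}

lemma exists_min (l : List ℝ) (h : l ≠ []) : ∃ s ∈ l, ∀ y ∈ l, s ≤ y := by
  induction l with
  | nil => simp at h
  | cons x l ih =>
    rcases eq_or_ne l [] with rfl | hne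
    · exact ⟨x, by simp⟩
    · obtain ⟨s, hs, hsle⟩ := ih hne
      rcases le_total s x with hsx | hxs
      · exact ⟨s, List.mem_cons_of_mem _ hs, by
          intro y hy
          rcases List.mem_cons.mp hy with rfl | hy
          · exact hsx
          · exact hsle y hy⟩
      · exact ⟨x, by simp, by
          intro y hy
          rcases List.mem_cons.mp hy with rfl | hy
          · exact le_rfl
          · exact hxs.trans (hsle y hy)⟩

lemma exists_ge_of_R {b e : List ℝ} {y : ℝ} (hR : R B b e) (hy : y ∈ e) (hyB : y ≤ B) :
    ∃ u ∈ b, y ≤ u := by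
  by_contra hcon
  push_neg at hcon
  have hfil : b.filter (fun z => y ≤ z) = [] := by
    apply List.filter_eq_nil_iff.mpr
    intro z hz
    simpa using (hcon z hz).not_ge
  have := hR y hy
  rw [hfil] at this
  simp at this
  linarith

lemma sum_filter_le {b : List ℝ} (hpos : ∀ z ∈ b, 0 < z) (p : ℝ → Bool) :
    (b.filter p).sum ≤ b.sum :=
  List.Sublist.sum_le_sum (List.filter_sublist (l := b)) (fun z hz => (hpos z hz).le)

lemma two_le_length_of_R {e e' : List ℝ} (hR : R B e e') (he' : e' ≠ [])
    (he'le : ∀ z ∈ e', z ≤ B / 2) (hepos : ∀ z ∈ e, 0 < z)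
    (hele : ∀ z ∈ e, z ≤ B / 2) (hene : e ≠ []) : 2 ≤ e.length := by
  obtain ⟨w, hw⟩ := List.exists_mem_of_ne_nil e' he'
  have h1 := hR w hw
  have h2 : (e.filter (fun z => w ≤ z)).sum ≤ e.sum := sum_filter_le hepos _
  by_contra hcon
  push_neg at hcon
  interval_cases h : e.length
  · exact hene (List.length_eq_zero_iff.mp h)
  · obtain ⟨z, rfl⟩ := List.length_eq_one_iff.mp h
    have hz := hele z (by simp)
    have hwle := he'le w hw
    simp only [List.sum_cons, List.sum_nil, add_zero] at h2
    linarith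

/-- every bin in a pairwise-R list which has a successor has at least two items -/
lemma prefix_two_le (l1 rest : List (List ℝ)) (hpw : (l1 ++ rest).Pairwise (R B))
    (hrest : rest ≠ [])
    (HS : ∀ e ∈ l1 ++ rest, e ≠ [] ∧ ∀ z ∈ e, 0 < z ∧ z ≤ B / 2) :
    2 * l1.length ≤ (l1.map List.length).sum := by
  induction l1 with
  | nil => simp
  | cons e l1 ih =>
    rw [List.cons_append, List.pairwise_cons] at hpw
    have htl : l1 ++ rest ≠ [] := by
      simp only [ne_eq, List.append_eq_nil_iff]
      rintro ⟨-, rfl⟩; exact hrest rfl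
    obtain ⟨e', he'⟩ := List.exists_mem_of_ne_nil _ htl
    have hRe : R B e e' := hpw.1 e' he'
    have hHSe := HS e (by simp)
    have hHSe' := HS e' (List.mem_cons_of_mem _ he')
    have h2 : 2 ≤ e.length :=
      two_le_length_of_R hRe hHSe'.1 (fun z hz => (hHSe'.2 z hz).2)
        (fun z hz => (hHSe.2 z hz).1) (fun z hz => (hHSe.2 z hz).2) hHSe.1
    have h3 := ih hpw.2 (fun e'' he'' => HS e'' (List.mem_cons_of_mem _ he''))
    simp only [List.map_cons, List.sum_cons, List.length_cons]
    omega

lemma flatten_len_lower (es : List (List ℝ)) (hpw : es.Pairwise (R B))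
    (HS : ∀ e ∈ es, e ≠ [] ∧ ∀ z ∈ e, 0 < z ∧ z ≤ B / 2) :
    2 * es.length ≤ (es.map List.length).sum + 1 := by
  induction es with
  | nil => simp
  | cons e es ih =>
    rw [List.pairwise_cons] at hpw
    rcases eq_or_ne es [] with rfl | hne
    · have := HS e (by simp)
      have : 1 ≤ e.length := by
        cases e with
        | nil => simp at this
        | cons _ _ => simp
      simp only [List.map_cons, List.sum_cons, List.length_cons, List.map_nil,
        List.sum_nil, List.length_nil]
      omega
    · obtain ⟨e', he'⟩ := List.exists_mem_of_ne_nil _ hne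
      have hHSe := HS e (by simp)
      have hHSe' := HS e' (List.mem_cons_of_mem _ he')
      have h2 : 2 ≤ e.length :=
        two_le_length_of_R (hpw.1 e' he') hHSe'.1 (fun z hz => (hHSe'.2 z hz).2)
          (fun z hz => (hHSe.2 z hz).1) (fun z hz => (hHSe.2 z hz).2) hHSe.1
      have h3 := ih hpw.2 (fun e'' he'' => HS e'' (List.mem_cons_of_mem _ he''))
      simp only [List.map_cons, List.sum_cons, List.length_cons]
      omega


lemma each_one (L : List (List ℝ)) (p : ℝ → Bool)
    (h : ∀ t ∈ L, 1 ≤ t.countP p) (h2 : L.flatten.countP p ≤ L.length) :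
    ∀ t ∈ L, t.countP p = 1 := by
  induction L with
  | nil => simp
  | cons t L ih =>
    have h1t := h t (by simp)
    have hrest := le_flatten_countP L p (fun u hu => h u (List.mem_cons_of_mem _ hu))
    simp only [List.flatten_cons, List.countP_append, List.length_cons] at h2
    intro u hu
    rcases List.mem_cons.mp hu with rfl | hu
    · omega
    · exact ih (fun v hv => h v (List.mem_cons_of_mem _ hv)) (by omega) u hu

end FFDProof

set_option maxHeartbeats 1000000 in
open FFDProof in
/-- if some FFD bin has larger total cost than some bin of an
optimal packing, then the number of FFD bins is at most `(3/2)·OPT − 1/2`. -/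
theorem stmt2 (B : ℝ) (hB : 0 < B) (items : List ℝ)
    (hitems : ∀ x ∈ items, 0 < x ∧ x ≤ B)
    (T : List (List ℝ)) (hT : IsPacking B items T)
    (hTopt : ∀ P, IsPacking B items P → T.length ≤ P.length)
    (Si Tj : List ℝ) (hSi : Si ∈ FFD B items) (hTj : Tj ∈ T)
    (hgt : Si.sum > Tj.sum) :
    ((FFD B items).length : ℝ) ≤ (3/2) * T.length - 1/2 := by

  obtain ⟨hTperm, hTsum⟩ := hT
  obtain ⟨⟨hpwS, hbinS⟩, hSperm⟩ := FFD_inv (B := B) items hitems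
  set S := FFD B items with hSdef
  set n := T.length with hndef
  set m := S.length with hmdef
  by_contra hcon
  push_neg at hcon
  -- turn the contradiction hypothesis into a natural-number inequality
  have hnm : 3 * n ≤ 2 * m := by
    have h1 : (3 : ℝ) * n < 2 * m + 1 := by linarith
    have h2 : 3 * n < 2 * m + 1 := by exact_mod_cast h1
    omega
  -- basic positivity and membership facts
  have hpos : ∀ b ∈ S, ∀ z ∈ b, 0 < z := fun b hb z hz => ((hbinS b hb).2.2 z hz).1
  have hzB : ∀ b ∈ S, ∀ z ∈ b, z ≤ B := fun b hb z hz => ((hbinS b hb).2.2 z hz).2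
  have hSsumle : ∀ b ∈ S, b.sum ≤ B := fun b hb => (hbinS b hb).2.1
  have hSnonnil : ∀ b ∈ S, b ≠ [] := fun b hb => (hbinS b hb).1
  have hTpos : ∀ t ∈ T, ∀ z ∈ t, 0 < z := by
    intro t ht z hz
    exact (hitems z (hTperm.mem_iff.mp (List.mem_flatten.mpr ⟨t, ht, hz⟩))).1
  -- n ≥ 1
  have hSine : Si ≠ [] := hSnonnil Si hSi
  have hn1 : 1 ≤ n := by
    obtain ⟨z, hz⟩ := List.exists_mem_of_ne_nil Si hSine
    have hzit : z ∈ items := hSperm.mem_iff.mp (List.mem_flatten.mpr ⟨Si, hSi, hz⟩)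
    have : z ∈ T.flatten := hTperm.mem_iff.mpr hzit
    obtain ⟨t, ht, -⟩ := List.mem_flatten.mp this
    have : T ≠ [] := List.ne_nil_of_mem ht
    rw [hndef]
    exact Nat.one_le_iff_ne_zero.mpr (fun h0 => this (List.length_eq_zero_iff.mp h0))
  have hmn : n < m := by omega
  -- split FFD bins into "mains" (first n) and "extras"
  set mains := S.take n with hmainsdef
  set extras := S.drop n with hextrasdef
  have hsplit : mains ++ extras = S := List.take_append_drop n S
  have hmainslen : mains.length = n := by
    rw [hmainsdef, List.length_take]; omega
  have hextraslen : extras.length = m - n := by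
    rw [hextrasdef, List.length_drop]
  have hmemmains : ∀ b ∈ mains, b ∈ S := by
    intro b hb; rw [← hsplit]; exact List.mem_append_left _ hb
  have hmemextras : ∀ e ∈ extras, e ∈ S := by
    intro e he; rw [← hsplit]; exact List.mem_append_right _ he
  have hpwME : (mains ++ extras).Pairwise (R B) := by rw [hsplit]; exact hpwS
  obtain ⟨hpwM, hpwE, hME⟩ := List.pairwise_append.mp hpwME
  -- main bins reject extra items
  have hbe : ∀ b ∈ mains, ∀ y ∈ extras.flatten, B < y + b.sum := by
    intro b hb y hy
    obtain ⟨e, he, hye⟩ := List.mem_flatten.mp hy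
    have h1 := hME b hb e he y hye
    have h2 : (b.filter (fun z => decide (y ≤ z))).sum ≤ b.sum :=
      sum_filter_le (hpos b (hmemmains b hb)) _
    linarith
  have hbe_ex : ∀ b ∈ mains, ∀ y ∈ extras.flatten, ∃ u ∈ b, y ≤ u := by
    intro b hb y hy
    obtain ⟨e, he, hye⟩ := List.mem_flatten.mp hy
    exact exists_ge_of_R (hME b hb e he) hye
      (hzB e (hmemextras e he) y hye)
  -- totals
  have htotTS : (T.map List.sum).sum = (S.map List.sum).sum := by
    rw [← List.sum_flatten, ← List.sum_flatten]
    exact (hTperm.trans hSperm.symm).sum_eq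
  have htotT_le : (T.map List.sum).sum ≤ (n : ℝ) * B := by
    have := sum_le_card_mul (T.map List.sum) B (by
      intro x hx
      obtain ⟨t, ht, rfl⟩ := List.mem_map.mp hx
      exact hTsum t ht)
    simpa [hndef] using this
  have hcnt : ∀ p : ℝ → Bool,
      T.flatten.countP p = mains.flatten.countP p + extras.flatten.countP p := by
    intro p
    rw [(hTperm.trans hSperm.symm).countP_eq, ← hsplit, List.flatten_append,
      List.countP_append]
  -- Step 1 : all extra items are ≤ B/2
  have hsmall : ∀ y ∈ extras.flatten, y ≤ B / 2 := by
    intro y hy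
    by_contra hy2
    push_neg at hy2
    set p := fun z : ℝ => decide (B / 2 < z) with hpdef
    have hTbin : ∀ t ∈ T, t.countP p ≤ 1 := by
      intro t ht
      refine bin_countP_le (B := B) p t (hTsum t ht) (hTpos t ht)
        (fun z hz hpz => by simpa [hpdef] using hpz) 1 (by linarith) (by linarith)
    have hTcount : T.flatten.countP p ≤ 1 * T.length := flatten_countP_le T p 1 hTbin
    have hMcount : mains.length ≤ mains.flatten.countP p := by
      refine le_flatten_countP mains p ?_
      intro b hb
      obtain ⟨u, hu, hyu⟩ := hbe_ex b hb y hy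
      have : p u := by simp [hpdef]; linarith
      exact List.countP_pos_iff.mpr ⟨u, hu, this⟩
    have hEcount : 0 < extras.flatten.countP p :=
      List.countP_pos_iff.mpr ⟨y, hy, by simp [hpdef]; linarith⟩
    have := hcnt p
    omega
  -- extras satisfy the structural hypotheses
  have hHS : ∀ e ∈ extras, e ≠ [] ∧ ∀ z ∈ e, 0 < z ∧ z ≤ B / 2 := by
    intro e he
    exact ⟨hSnonnil e (hmemextras e he), fun z hz =>
      ⟨hpos e (hmemextras e he) z hz,
        hsmall z (List.mem_flatten.mpr ⟨e, he, hz⟩)⟩⟩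
  set D := extras.flatten.length with hDdef
  have hDflat : D = (extras.map List.length).sum := by
    rw [hDdef, List.length_flatten]
  have hDlow : 2 * extras.length ≤ D + 1 := by
    rw [hDflat]; exact flatten_len_lower extras hpwE hHS
  -- Step : D < n
  have hDhigh : D < n := by
    by_contra hD2
    push_neg at hD2
    set A := mains.map List.sum with hAdef
    set ys := extras.flatten.take n with hysdef
    have hAlen : A.length = n := by rw [hAdef, List.length_map, hmainslen]
    have hyslen : ys.length = n := by
      rw [hysdef, List.length_take]; omega
    have hAne : A ≠ [] := by
      intro h0; rw [h0] at hAlen; simp at hAlen; omega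
    have hpair : ∀ a ∈ A, ∀ y ∈ ys, B < a + y := by
      intro a ha y hy
      obtain ⟨b, hb, rfl⟩ := List.mem_map.mp ha
      have := hbe b hb y (List.mem_of_mem_take hy)
      linarith
    have h1 : (A.length : ℝ) * B < A.sum + ys.sum := pair_sum_lt A ys B hAne (by omega) hpair
    have h2 : (S.map List.sum).sum = A.sum + extras.flatten.sum := by
      rw [← hsplit, List.map_append, List.sum_append, hAdef, List.sum_flatten]
    have h3 : ys.sum ≤ extras.flatten.sum := by
      conv_rhs => rw [← List.take_append_drop n extras.flatten]
      rw [List.sum_append]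
      have : 0 ≤ (extras.flatten.drop n).sum := by
        apply List.sum_nonneg
        intro x hx
        obtain ⟨e, he, hxe⟩ := List.mem_flatten.mp (List.mem_of_mem_drop hx)
        exact (hpos e (hmemextras e he) x hxe).le
      rw [hysdef]
      linarith
    rw [hAlen] at h1
    linarith [htotTS, htotT_le]
  -- the numerology
  set k := m - n with hkdef
  have hn2k : n = 2 * k := by omega
  have hm3k : m = 3 * k := by omega
  have hD2k : D + 1 = 2 * k := by omega
  have hk1 : 1 ≤ k := by omega
  -- T-side total bounded via Tj
  obtain ⟨t1, t2, hT12⟩ := List.append_of_mem hTj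
  have hTrest_mem : ∀ t ∈ t1 ++ t2, t ∈ T := by
    intro t ht
    rw [hT12]
    rcases List.mem_append.mp ht with h | h
    · exact List.mem_append_left _ h
    · exact List.mem_append_right _ (List.mem_cons_of_mem _ h)
  have hTrestlen : (t1 ++ t2).length + 1 = n := by
    have : T.length = t1.length + 1 + t2.length := by rw [hT12]; simp; omega
    simp only [List.length_append]
    omega
  have hTjsplit : (T.map List.sum).sum
      = Tj.sum + ((t1 ++ t2).map List.sum).sum := by
    rw [hT12]
    simp [List.sum_append]
    ring
  have hTjle : (((t1 ++ t2)).map List.sum).sum ≤ ((n : ℝ) - 1) * B := by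
    have h := sum_le_card_mul ((t1 ++ t2).map List.sum) B (by
      intro x hx
      obtain ⟨t, ht, rfl⟩ := List.mem_map.mp hx
      exact hTsum t (hTrest_mem t ht))
    rw [List.length_map] at h
    have hc : ((t1 ++ t2).length : ℝ) = (n : ℝ) - 1 := by
      have := hTrestlen
      push_cast [← this]
      ring
    rw [hc] at h
    exact h
  -- Step : all main bins have cost < Tj
  have hmainlt : ∀ b ∈ mains, b.sum < Tj.sum := by
    intro b hb
    obtain ⟨m1, m2, hm12⟩ := List.append_of_mem hb
    set A := (m1 ++ m2).map List.sum with hAdef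
    have hAlen : A.length + 1 = n := by
      have : mains.length = m1.length + 1 + m2.length := by rw [hm12]; simp; omega
      rw [hAdef]
      simp only [List.length_map, List.length_append]
      omega
    have hAne : A ≠ [] := by
      intro h0; rw [h0] at hAlen; simp at hAlen; omega
    have hlenDA : A.length = extras.flatten.length := by omega
    have hpair : ∀ a ∈ A, ∀ y ∈ extras.flatten, B < a + y := by
      intro a ha y hy
      obtain ⟨b', hb', rfl⟩ := List.mem_map.mp ha
      have hb'm : b' ∈ mains := by
        rw [hm12]
        rcases List.mem_append.mp hb' with h | h
        · exact List.mem_append_left _ h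
        · exact List.mem_append_right _ (List.mem_cons_of_mem _ h)
      have := hbe b' hb'm y hy
      linarith
    have h1 : (A.length : ℝ) * B < A.sum + extras.flatten.sum :=
      pair_sum_lt A extras.flatten B hAne hlenDA hpair
    have h2 : (mains.map List.sum).sum = b.sum + A.sum := by
      rw [hm12, hAdef]
      simp [List.sum_append]
      ring
    have h3 : (S.map List.sum).sum = (mains.map List.sum).sum + extras.flatten.sum := by
      rw [← hsplit, List.map_append, List.sum_append, List.sum_flatten]
    have hcast : (A.length : ℝ) = (n : ℝ) - 1 := by
      push_cast [← hAlen]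
      ring
    rw [hcast] at h1
    linarith [htotTS]
  -- Si is an extra bin
  have hSiE : Si ∈ extras := by
    have : Si ∈ mains ++ extras := by rw [hsplit]; exact hSi
    rcases List.mem_append.mp this with h | h
    · exfalso; have := hmainlt Si h; linarith
    · exact h
  -- minimum extra item s
  have hDne : extras.flatten ≠ [] := by
    intro h0
    have : D = 0 := by rw [hDdef, h0]; simp
    omega
  obtain ⟨s, hsmem, hsle⟩ := exists_min extras.flatten hDne
  obtain ⟨es, hes, hses⟩ := List.mem_flatten.mp hsmem
  have hs_pos : 0 < s := hpos es (hmemextras es hes) s hses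
  have hs_half : s ≤ B / 2 := hsmall s hsmem
  have hbs : ∀ b ∈ mains, B < s + b.sum := fun b hb => hbe b hb s hsmem
  have hbs_ge : ∀ b ∈ mains, ∃ u ∈ b, s ≤ u := fun b hb => hbe_ex b hb s hsmem
  -- decomposition of extras around Si
  obtain ⟨l1, l2, hl12⟩ := List.append_of_mem hSiE
  have hexlen : extras.length = l1.length + 1 + l2.length := by
    rw [hl12]; simp; omega
  have hl1bound : 2 * l1.length ≤ (l1.map List.length).sum := by
    refine prefix_two_le (B := B) l1 (Si :: l2) ?_ (by simp) ?_
    · rw [← hl12]; exact hpwE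
    · rw [← hl12]; exact hHS
  have hl2bound : 2 * l2.length ≤ (l2.map List.length).sum + 1 := by
    refine flatten_len_lower (B := B) l2 ?_ ?_
    · have h1 : (l1 ++ Si :: l2).Pairwise (R B) := by rw [← hl12]; exact hpwE
      exact (List.pairwise_cons.mp (List.pairwise_append.mp h1).2.1).2
    · intro e he
      exact hHS e (by rw [hl12]; exact List.mem_append_right _ (List.mem_cons_of_mem _ he))
  have hDsum : D = (l1.map List.length).sum + Si.length + (l2.map List.length).sum := by
    rw [hDdef, hl12]
    simp [List.length_flatten]
    omega
  have hSilen1 : 1 ≤ Si.length := by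
    have := hSnonnil Si hSi
    cases hSic : Si with
    | nil => exact absurd hSic this
    | cons a l => simp
  -- Si has at most two items, and exactly two unless it is a singleton
  have hSicase : Si.length = 1 ∨ (Si.length = 2 ∧ l2 ≠ []) := by
    rcases eq_or_ne l2 [] with rfl | hl2ne
    · left
      simp only [List.length_nil, List.map_nil, List.sum_nil] at hexlen hDsum
      omega
    · have hl2len : 1 ≤ l2.length := by
        cases l2 with
        | nil => exact absurd rfl hl2ne
        | cons a l => simp
      have : Si.length ≤ 2 := by omega
      interval_cases hsl : Si.length
      · left; rfl
      · right; exact ⟨rfl, hl2ne⟩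
  -- dispatch the singleton case
  rcases hSicase with hSi1 | ⟨hSi2, hl2ne⟩
  · obtain ⟨y', hy'⟩ := List.length_eq_one_iff.mp hSi1
    have hmne : mains ≠ [] := by
      intro h0; rw [h0] at hmainslen; simp at hmainslen; omega
    obtain ⟨b0, hb0⟩ := List.exists_mem_of_ne_nil mains hmne
    have hy'mem : y' ∈ extras.flatten :=
      List.mem_flatten.mpr ⟨Si, hSiE, by rw [hy']; simp⟩
    have h1 := hbe b0 hb0 y' hy'mem
    have h2 := hsmall y' hy'mem
    have h3 := hmainlt b0 hb0
    have h4 : Si.sum = y' := by rw [hy']; simp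
    linarith
  -- now Si = [u,v] and k ≥ 2
  have hk2 : 2 ≤ k := by
    have : 1 ≤ l2.length := by
      cases l2 with
      | nil => exact absurd rfl hl2ne
      | cons a l => simp
    omega
  -- Step 9 : B < 3 * s
  have hstep9 : B / 3 < s := by
    have h9a : ((mains.map List.sum).length : ℝ) * (B - s) < (mains.map List.sum).sum := by
      refine card_mul_lt_sum _ _ ?_ ?_
      · intro h0
        have := hmainslen
        rw [← List.length_map (as := mains) List.sum, h0] at this
        simp at this; omega
      · intro a ha
        obtain ⟨b, hb, rfl⟩ := List.mem_map.mp ha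
        have := hbs b hb
        linarith
    set rest := l1.flatten ++ l2.flatten with hrestdef
    have hrestmem : ∀ z ∈ rest, z ∈ extras.flatten := by
      intro z hz
      rw [hl12, List.flatten_append, List.flatten_cons]
      rcases List.mem_append.mp hz with h | h
      · exact List.mem_append_left _ h
      · exact List.mem_append_right _ (List.mem_append_right _ h)
    have hrestlen : rest.length + 2 = D := by
      rw [hrestdef, hDdef, hl12]
      simp [List.length_append, List.length_flatten]
      omega
    have h9b : (rest.length : ℝ) * s ≤ rest.sum :=
      card_mul_le_sum rest s (fun z hz => hsle z (hrestmem z hz))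
    have h9c : extras.flatten.sum = Si.sum + rest.sum := by
      rw [hl12, hrestdef]
      simp [List.flatten_append, List.sum_append]
      ring
    have h3 : (S.map List.sum).sum = (mains.map List.sum).sum + extras.flatten.sum := by
      rw [← hsplit, List.map_append, List.sum_append, List.sum_flatten]
    have hcast1 : ((mains.map List.sum).length : ℝ) = 2 * (k : ℝ) := by
      rw [List.length_map, hmainslen]
      exact_mod_cast congrArg (Nat.cast : ℕ → ℝ) hn2k
    have hcast2 : (rest.length : ℝ) = 2 * (k : ℝ) - 3 := by
      have h1 : rest.length + 4 = 2 * k + 1 := by omega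
      have h2 : ((rest.length : ℕ) : ℝ) + 4 = 2 * (k : ℝ) + 1 := by exact_mod_cast h1
      linarith
    have hcastn : (n : ℝ) = 2 * (k : ℝ) := by exact_mod_cast hn2k
    rw [hcast1] at h9a
    rw [hcast2] at h9b
    -- total comparison
    have hkR : (2 : ℝ) ≤ (k : ℝ) := by exact_mod_cast hk2
    nlinarith [htotTS, hTjsplit, hTjle, hgt]
  -- Step 10 : counting items larger than B/3
  set p3 := fun z : ℝ => decide (B / 3 < z) with hp3def
  have hT3 : ∀ t ∈ T, t.countP p3 ≤ 2 := by
    intro t ht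
    exact bin_countP_le (B := B) p3 t (hTsum t ht) (hTpos t ht)
      (fun z hz hpz => by simpa only [hp3def, decide_eq_true_eq] using hpz) 2 (by linarith) (by linarith)
  have hTtot3 : T.flatten.countP p3 ≤ 2 * n := by
    have := flatten_countP_le T p3 2 hT3
    omega
  have hE3 : extras.flatten.countP p3 = D := by
    rw [hDdef]
    apply List.countP_eq_length.mpr
    intro z hz
    have := hsle z hz
    simp only [hp3def, decide_eq_true_eq]
    linarith
  have hM3each : ∀ b ∈ mains, 1 ≤ b.countP p3 := by
    intro b hb
    obtain ⟨u, hu, hsu⟩ := hbs_ge b hb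
    exact List.countP_pos_iff.mpr ⟨u, hu, by simp only [hp3def, decide_eq_true_eq]; linarith⟩
  have hMtot3 : mains.flatten.countP p3 + D ≤ 2 * n := by
    have := hcnt p3
    omega
  -- a main bin with a unique large item contains an item > B - s
  have hkey_one : ∀ b ∈ mains, b.countP p3 = 1 →
      ∃ u, b.filter p3 = [u] ∧ u ∈ b ∧ B - s < u ∧ s ≤ u := by
    intro b hb h1
    have hflen : (b.filter p3).length = 1 := by
      rw [← List.countP_eq_length_filter]; exact h1
    obtain ⟨u, hu⟩ := List.length_eq_one_iff.mp hflen
    obtain ⟨u', hu'b, hu's⟩ := hbs_ge b hb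
    have hu'f : u' ∈ b.filter p3 :=
      List.mem_filter.mpr ⟨hu'b, by simp only [hp3def, decide_eq_true_eq]; linarith⟩
    rw [hu] at hu'f
    have huu : u' = u := by simpa using hu'f
    have hub : u ∈ b := List.mem_of_mem_filter (l := b) (p := p3) (by rw [hu]; simp)
    have hsu : s ≤ u := huu ▸ hu's
    have hR := hME b hb es hes s hses
    have hsubl : List.Sublist (b.filter (fun z => decide (s ≤ z))) (b.filter p3) := by
      apply List.monotone_filter_right
      intro a ha
      simp only [decide_eq_true_eq] at ha
      simp only [hp3def, decide_eq_true_eq]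
      linarith
    rw [hu] at hsubl
    rcases List.sublist_singleton.mp hsubl with h0 | h0
    · rw [h0] at hR
      simp at hR
      linarith
    · rw [h0] at hR
      simp at hR
      exact ⟨u, hu, hub, by linarith, hsu⟩
  set q := fun z : ℝ => decide (B - s < z) with hqdef
  have hTq : ∀ t ∈ T, t.countP q ≤ 1 := by
    intro t ht
    exact bin_countP_le (B := B) q t (hTsum t ht) (hTpos t ht)
      (fun z hz hpz => by simpa only [hqdef, decide_eq_true_eq] using hpz) 1
      (by push_cast; linarith) (by linarith)
  by_cases hA : ∀ b ∈ mains, b.countP p3 ≤ 1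
  · -- Subcase A : every main bin has a unique large item
    have hMq : ∀ b ∈ mains, 1 ≤ b.countP q := by
      intro b hb
      obtain ⟨u, -, hub, hh, -⟩ := hkey_one b hb (le_antisymm (hA b hb) (hM3each b hb))
      exact List.countP_pos_iff.mpr ⟨u, hub, by simp only [hqdef, decide_eq_true_eq]; linarith⟩
    have hnq : n ≤ T.flatten.countP q := by
      have h1 : mains.length ≤ mains.flatten.countP q := le_flatten_countP mains q hMq
      have := hcnt q
      omega
    have hsT : s ∈ T.flatten := by
      apply (hTperm.trans hSperm.symm).mem_iff.mpr
      rw [← hsplit, List.flatten_append]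
      exact List.mem_append_right _ hsmem
    obtain ⟨ts, hts, hsts⟩ := List.mem_flatten.mp hsT
    obtain ⟨w1, w2, hw12⟩ := List.append_of_mem hts
    have hw_mem : ∀ t ∈ w1 ++ w2, t ∈ T := by
      intro t ht
      rw [hw12]
      rcases List.mem_append.mp ht with h | h
      · exact List.mem_append_left _ h
      · exact List.mem_append_right _ (List.mem_cons_of_mem _ h)
    have hw_len : w1.length + w2.length + 1 = n := by
      have : T.length = w1.length + 1 + w2.length := by rw [hw12]; simp; omega
      omega
    have htsq : 1 ≤ ts.countP q := by
      by_contra h0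
      push_neg at h0
      have hts0 : ts.countP q = 0 := by omega
      have hflt : T.flatten.countP q
          = w1.flatten.countP q + ts.countP q + w2.flatten.countP q := by
        rw [hw12]
        simp [List.flatten_append, List.countP_append]
        omega
      have h1 := flatten_countP_le w1 q 1 (fun t ht => hTq t (hw_mem t (List.mem_append_left _ ht)))
      have h2 := flatten_countP_le w2 q 1 (fun t ht => hTq t (hw_mem t (List.mem_append_right _ ht)))
      omega
    obtain ⟨uq, huq, huq2⟩ := List.countP_pos_iff.mp htsq
    simp only [hqdef, decide_eq_true_eq] at huq2
    have huqs : s < uq := by linarith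
    have hsne : s ≠ uq := ne_of_lt huqs
    have h1 : ts.Perm (uq :: ts.erase uq) := List.perm_cons_erase huq
    have hserase : s ∈ ts.erase uq := (List.mem_erase_of_ne hsne).mpr hsts
    have h2 : (ts.erase uq).Perm (s :: (ts.erase uq).erase s) := List.perm_cons_erase hserase
    have h3 : ts.sum = uq + (s + ((ts.erase uq).erase s).sum) := by
      rw [h1.sum_eq, List.sum_cons, h2.sum_eq, List.sum_cons]
    have h4 : 0 ≤ ((ts.erase uq).erase s).sum := List.sum_nonneg (fun z hz =>
      (hTpos ts hts z (List.mem_of_mem_erase (List.mem_of_mem_erase hz))).le)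
    have h5 := hTsum ts hts
    linarith
  · -- Subcase B : some main bin has at least two large items
    push_neg at hA
    obtain ⟨b0, hb0, hb0c⟩ := hA
    obtain ⟨m1, m2, hm12⟩ := List.append_of_mem hb0
    have hmem12 : ∀ b ∈ m1 ++ m2, b ∈ mains := by
      intro b hb
      rw [hm12]
      rcases List.mem_append.mp hb with h | h
      · exact List.mem_append_left _ h
      · exact List.mem_append_right _ (List.mem_cons_of_mem _ h)
    have hlen12 : m1.length + m2.length + 1 = n := by
      have : mains.length = m1.length + 1 + m2.length := by rw [hm12]; simp; omega
      omega
    have hc1 : m1.length ≤ m1.flatten.countP p3 :=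
      le_flatten_countP m1 p3 (fun b hb => hM3each b (hmem12 b (List.mem_append_left _ hb)))
    have hc2 : m2.length ≤ m2.flatten.countP p3 :=
      le_flatten_countP m2 p3 (fun b hb => hM3each b (hmem12 b (List.mem_append_right _ hb)))
    have hMsplit : mains.flatten.countP p3
        = m1.flatten.countP p3 + b0.countP p3 + m2.flatten.countP p3 := by
      rw [hm12]
      simp [List.flatten_append, List.countP_append]
      omega
    have hb0c2 : b0.countP p3 = 2 := by omega
    have hm1eq : m1.flatten.countP p3 = m1.length := by omega
    have hm2eq : m2.flatten.countP p3 = m2.length := by omega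
    have heach1 : ∀ b ∈ m1 ++ m2, b.countP p3 = 1 := by
      intro b hb
      rcases List.mem_append.mp hb with h | h
      · exact each_one m1 p3
          (fun u hu => hM3each u (hmem12 u (List.mem_append_left _ hu)))
          (le_of_eq hm1eq) b h
      · exact each_one m2 p3
          (fun u hu => hM3each u (hmem12 u (List.mem_append_right _ hu)))
          (le_of_eq hm2eq) b h
    have hT3each : ∀ t ∈ T, t.countP p3 = 2 := by
      intro t ht
      by_contra hne2
      have htle : t.countP p3 ≤ 1 := by
        have := hT3 t ht
        omega
      obtain ⟨u1, u2, hu12⟩ := List.append_of_mem ht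
      have humem : ∀ t' ∈ u1 ++ u2, t' ∈ T := by
        intro t' ht'
        rw [hu12]
        rcases List.mem_append.mp ht' with h | h
        · exact List.mem_append_left _ h
        · exact List.mem_append_right _ (List.mem_cons_of_mem _ h)
      have hulen : u1.length + u2.length + 1 = n := by
        have : T.length = u1.length + 1 + u2.length := by rw [hu12]; simp; omega
        omega
      have hTsplit3 : T.flatten.countP p3
          = u1.flatten.countP p3 + t.countP p3 + u2.flatten.countP p3 := by
        rw [hu12]
        simp [List.flatten_append, List.countP_append]
        omega
      have h1 := flatten_countP_le u1 p3 2 (fun t' ht' => hT3 t' (humem t' (List.mem_append_left _ ht')))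
      have h2 := flatten_countP_le u2 p3 2 (fun t' ht' => hT3 t' (humem t' (List.mem_append_right _ ht')))
      have := hcnt p3
      omega
    have hQmains : ∀ b ∈ m1 ++ m2, 1 ≤ b.countP q := by
      intro b hb
      obtain ⟨u, -, hub, hh, -⟩ := hkey_one b (hmem12 b hb) (heach1 b hb)
      exact List.countP_pos_iff.mpr ⟨u, hub, by simp only [hqdef, decide_eq_true_eq]; linarith⟩
    have hQlow : n - 1 ≤ T.flatten.countP q := by
      have h1 : m1.length ≤ m1.flatten.countP q :=
        le_flatten_countP m1 q (fun b hb => hQmains b (List.mem_append_left _ hb))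
      have h2 : m2.length ≤ m2.flatten.countP q :=
        le_flatten_countP m2 q (fun b hb => hQmains b (List.mem_append_right _ hb))
      have hsplitq : mains.flatten.countP q
          = m1.flatten.countP q + b0.countP q + m2.flatten.countP q := by
        rw [hm12]
        simp [List.flatten_append, List.countP_append]
        omega
      have := hcnt q
      omega
    set pw := fun z : ℝ => decide (B / 3 < z ∧ z < s) with hpwdef
    have htransfer : ∀ t ∈ T, 1 ≤ t.countP q → 1 ≤ t.countP pw := by
      intro t ht htq
      obtain ⟨h, hht, hqh⟩ := List.countP_pos_iff.mp htq
      simp only [hqdef, decide_eq_true_eq] at hqh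
      have hfl2 : (t.filter p3).length = 2 := by
        rw [← List.countP_eq_length_filter]
        exact hT3each t ht
      have hhf : h ∈ t.filter p3 :=
        List.mem_filter.mpr ⟨hht, by simp only [hp3def, decide_eq_true_eq]; linarith⟩
      have hlen1 : ((t.filter p3).erase h).length = 1 := by
        have := List.length_erase_of_mem hhf
        omega
      obtain ⟨w, hw⟩ := List.length_eq_one_iff.mp hlen1
      have hwf : w ∈ t.filter p3 := List.mem_of_mem_erase (by rw [hw]; simp)
      have hwt : w ∈ t := List.mem_of_mem_filter hwf
      have hwp3 : B / 3 < w := by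
        have := List.of_mem_filter hwf
        simpa only [hp3def, decide_eq_true_eq] using this
      have herase : (t.filter p3).Perm (h :: (t.filter p3).erase h) :=
        List.perm_cons_erase hhf
      have hsum2 : (t.filter p3).sum = h + w := by
        rw [herase.sum_eq, hw]
        simp
      have hfs : (t.filter p3).sum ≤ t.sum := sum_filter_le (hTpos t ht) p3
      have htb := hTsum t ht
      have hws : w < s := by linarith
      exact List.countP_pos_iff.mpr ⟨w, hwt, by simp only [hpwdef, decide_eq_true_eq]; exact ⟨hwp3, hws⟩⟩
    have htrans2 := countP_transfer T q pw hTq htransfer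
    have hEpw : extras.flatten.countP pw = 0 := by
      apply List.countP_eq_zero.mpr
      intro z hz
      simp only [hpwdef, decide_eq_true_eq, not_and]
      intro _
      exact not_lt.mpr (hsle z hz)
    have hm12pw : ∀ b ∈ m1 ++ m2, b.countP pw = 0 := by
      intro b hb
      obtain ⟨u, hufil, hub, -, hsu⟩ := hkey_one b (hmem12 b hb) (heach1 b hb)
      apply List.countP_eq_zero.mpr
      intro z hz hzpw
      simp only [hpwdef, decide_eq_true_eq] at hzpw
      have hzf : z ∈ b.filter p3 :=
        List.mem_filter.mpr ⟨hz, by simp only [hp3def, decide_eq_true_eq]; exact hzpw.1⟩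
      rw [hufil] at hzf
      have : z = u := by simpa using hzf
      subst this
      linarith [hzpw.2]
    have hb0pw : b0.countP pw ≤ 1 := by
      have hfl2 : (b0.filter p3).length = 2 := by
        rw [← List.countP_eq_length_filter]
        exact hb0c2
      obtain ⟨u0, hu0b, hu0s⟩ := hbs_ge b0 hb0
      have hu0f : u0 ∈ b0.filter p3 :=
        List.mem_filter.mpr ⟨hu0b, by simp only [hp3def, decide_eq_true_eq]; linarith⟩
      have hsubl : List.Sublist (b0.filter pw) (b0.filter p3) := by
        apply List.monotone_filter_right
        intro a ha
        simp only [hpwdef, decide_eq_true_eq] at ha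
        simp only [hp3def, decide_eq_true_eq]
        exact ha.1
      by_contra hcon2
      push_neg at hcon2
      have hlenpw : (b0.filter pw).length = 2 := by
        have hle := hsubl.length_le
        have : 2 ≤ (b0.filter pw).length := by
          rw [← List.countP_eq_length_filter]
          omega
        omega
      have heq := hsubl.eq_of_length (by omega)
      rw [← heq] at hu0f
      have := List.of_mem_filter hu0f
      simp only [hpwdef, decide_eq_true_eq] at this
      linarith [this.2]
    have hmainspw : mains.flatten.countP pw ≤ 1 := by
      have hsp : mains.flatten.countP pw
          = m1.flatten.countP pw + b0.countP pw + m2.flatten.countP pw := by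
        rw [hm12]
        simp [List.flatten_append, List.countP_append]
        omega
      have h1 : m1.flatten.countP pw ≤ 0 * m1.length :=
        flatten_countP_le m1 pw 0 (fun b hb =>
          le_of_eq (hm12pw b (List.mem_append_left _ hb)))
      have h2 : m2.flatten.countP pw ≤ 0 * m2.length :=
        flatten_countP_le m2 pw 0 (fun b hb =>
          le_of_eq (hm12pw b (List.mem_append_right _ hb)))
      simp only [Nat.zero_mul, Nat.le_zero] at h1 h2
      omega
    have hfinal := hcnt pw
    omega
end

section
/- Let J be a finite set of items with costs in (0, B] and suppose an optimal bin packing of J into capacity-B bins uses OPT bins, one of which, say S, has total cost B' ≤ B and contains an item I. Let Ĵ be obtained from J by replacing I with an item Î of cost cost(I) + B − B'. Then the optimal number of capacity-B bins for Ĵ equals OPT. -/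
/-- A packing of a multiset of item costs into capacity-`B` bins:
the bins join (sum, in the multiset monoid) to the items, and each bin has
total cost at most `B`. -/
def MPacking (B : ℝ) (items : Multiset ℝ) (P : Multiset (Multiset ℝ)) : Prop :=
  P.sum = items ∧ ∀ b ∈ P, b.sum ≤ B

lemma mem_msum {s : Multiset (Multiset ℝ)} {a : ℝ} (h : a ∈ s.sum) : ∃ t ∈ s, a ∈ t := by
  induction s using Multiset.induction with
  | empty => simp at h
  | cons c s ih =>
    rw [Multiset.sum_cons, Multiset.mem_add] at h
    rcases h with h | h
    · exact ⟨c, Multiset.mem_cons_self _ _, h⟩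
    · obtain ⟨t, ht, hat⟩ := ih h
      exact ⟨t, Multiset.mem_cons_of_mem ht, hat⟩


/-- if an optimal packing `T` of `items` has a bin `S` of total
cost `B' ≤ B` containing an item `x`, and we replace `x` by an item of cost
`x + B − B'`, then the optimal number of capacity-`B` bins is unchanged. -/
theorem stmt3 (B : ℝ) (items : Multiset ℝ)
    (hitems : ∀ x ∈ items, 0 < x ∧ x ≤ B)
    (T : Multiset (Multiset ℝ)) (hT : MPacking B items T)
    (hTopt : ∀ P, MPacking B items P → Multiset.card T ≤ Multiset.card P)
    (S : Multiset ℝ) (hS : S ∈ T) (x : ℝ) (hx : x ∈ S)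
    (B' : ℝ) (hB' : S.sum = B') (hB'le : B' ≤ B) :
    (∃ P', MPacking B ((x + B - B') ::ₘ items.erase x) P' ∧
        Multiset.card P' = Multiset.card T) ∧
    (∀ P', MPacking B ((x + B - B') ::ₘ items.erase x) P' →
        Multiset.card T ≤ Multiset.card P') := by
  have hSsum : S.sum = x + (S.erase x).sum := by
    conv_lhs => rw [← Multiset.cons_erase hx]
    rw [Multiset.sum_cons]
  have h1 : items = x ::ₘ (S.erase x + (T.erase S).sum) := by
    rw [← hT.1]
    conv_lhs => rw [← Multiset.cons_erase hS]
    rw [Multiset.sum_cons, ← Multiset.cons_add, Multiset.cons_erase hx]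
  have herase : items.erase x = S.erase x + (T.erase S).sum := by
    rw [h1, Multiset.erase_cons_head]
  constructor
  · refine ⟨((x + B - B') ::ₘ S.erase x) ::ₘ T.erase S, ⟨?_, ?_⟩, ?_⟩
    · rw [Multiset.sum_cons, herase, Multiset.cons_add]
    · intro b hb
      rcases Multiset.mem_cons.mp hb with rfl | hb
      · rw [Multiset.sum_cons]
        have : (S.erase x).sum = B' - x := by linarith [hSsum, hB']
        linarith
      · exact hT.2 b (Multiset.mem_of_mem_erase hb)
    · rw [Multiset.card_cons, Multiset.card_erase_of_mem hS]
      exact Nat.succ_pred_eq_of_pos (Multiset.card_pos_iff_exists_mem.mpr ⟨S, hS⟩)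
  · intro P' hP'
    set y := x + B - B' with hy
    have hyP : y ∈ P'.sum := by rw [hP'.1]; exact Multiset.mem_cons_self _ _
    obtain ⟨b, hbP, hyb⟩ := mem_msum hyP
    have hbsum : b.sum = y + (b.erase y).sum := by
      conv_lhs => rw [← Multiset.cons_erase hyb]
      rw [Multiset.sum_cons]
    refine le_trans (hTopt ((x ::ₘ b.erase y) ::ₘ P'.erase b) ⟨?_, ?_⟩) ?_
    · rw [Multiset.sum_cons, Multiset.cons_add]
      have hPsum : P'.sum = b + (P'.erase b).sum := by
        conv_lhs => rw [← Multiset.cons_erase hbP]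
        rw [Multiset.sum_cons]
      have : y ::ₘ (b.erase y + (P'.erase b).sum) = y ::ₘ items.erase x := by
        rw [← Multiset.cons_add, Multiset.cons_erase hyb, ← hPsum, hP'.1]
      have h2 : b.erase y + (P'.erase b).sum = items.erase x :=
        (Multiset.cons_inj_right y).mp this
      have hxitems : x ∈ items := by rw [h1]; exact Multiset.mem_cons_self _ _
      rw [h2, Multiset.cons_erase hxitems]
    · intro c hc
      rcases Multiset.mem_cons.mp hc with rfl | hc
      · rw [Multiset.sum_cons]
        have hb := hP'.2 b hbP
        linarith [hbsum]
      · exact hP'.2 c (Multiset.mem_of_mem_erase hc)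
    · rw [Multiset.card_cons, Multiset.card_erase_of_mem hbP]
      exact (Nat.succ_pred_eq_of_pos (Multiset.card_pos_iff_exists_mem.mpr ⟨b, hbP⟩)).le
end

section
/- Let ℐ be a finite set of delivery intervals with costs in (0, B], partitioned by colors into compatible classes J_1, …, J_ω (each class consisting of pairwise disjoint intervals), where ω is the maximum number of pairwise conflicting intervals. For each class J_k, let m_k be the number of capacity-B bins used by a first-fit packing of J_k. Let ε_max = min(1/2, (1/B)·max_j cost(I_j)), ε_min = (1/B)·min_j cost(I_j), and let OPT be the minimum number of drones (bins with capacity B, where each drone's set of intervals must be pairwise disjoint) needed to serve all intervals. Then Σ_{k=1}^{ω} m_k ≤ OPT/(1 − ε_max) + ω·(1 − ε_min/(1 − ε_max)). -/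
lemma sum_part {α β : Type*} [DecidableEq α] [Fintype β] (T : Finset α)
    (P : β → Finset α) (h1 : ∀ j ∈ T, ∃! i, j ∈ P i) (h2 : ∀ i, P i ⊆ T)
    (f : α → ℝ) : ∑ i, (P i).sum f = T.sum f := by
  have hT : T = Finset.univ.biUnion P := by
    ext j
    simp only [Finset.mem_biUnion, Finset.mem_univ, true_and]
    constructor
    · intro hj; obtain ⟨i, hi, -⟩ := h1 j hj; exact ⟨i, hi⟩
    · rintro ⟨i, hi⟩; exact h2 i hi
  rw [hT, Finset.sum_biUnion]
  intro i _ i' _ hii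
  refine Finset.disjoint_left.mpr ?_
  intro j hji hji'
  obtain ⟨i0, -, huniq⟩ := h1 j (h2 i hji)
  exact hii ((huniq i hji).trans (huniq i' hji').symm)

/-- intervals `[lo j, up j]` with costs in `(0, B]`, partitioned
into `ω` compatible color classes `C k` (`ω` = maximum number of pairwise
conflicting intervals).  Each class `C k` is packed by first-fit (encoded by
its structural property) into `m k` capacity-`B` bins.  `OPT` is the minimum
number of drones (feasible assignments: pairwise disjoint intervals, total
cost ≤ B) covering all intervals.  Then
`Σ_k m k ≤ OPT/(1 − ε_max) + ω(1 − ε_min/(1 − ε_max))`. -/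
theorem stmt6 {α : Type*} [DecidableEq α] (B : ℝ) (hB : 0 < B)
    (J : Finset α) (hJ : J.Nonempty) (lo up cost : α → ℝ)
    (hcost : ∀ j ∈ J, 0 < cost j ∧ cost j ≤ B)
    (ω : ℕ)
    (hω : IsGreatest {c : ℕ | ∃ S ⊆ J, S.card = c ∧
        ∀ i ∈ S, ∀ j ∈ S, i ≠ j →
          ¬ Disjoint (Set.Icc (lo i) (up i)) (Set.Icc (lo j) (up j))} ω)
    (C : Fin ω → Finset α)
    (hCpart : ∀ j ∈ J, ∃! k, j ∈ C k) (hCsub : ∀ k, C k ⊆ J)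
    (hCcomp : ∀ k, ∀ i ∈ C k, ∀ j ∈ C k, i ≠ j →
        Disjoint (Set.Icc (lo i) (up i)) (Set.Icc (lo j) (up j)))
    (m : Fin ω → ℕ) (S : (k : Fin ω) → Fin (m k) → Finset α)
    (hSpart : ∀ k, ∀ j ∈ C k, ∃! i, j ∈ S k i)
    (hSsub : ∀ k i, S k i ⊆ C k)
    (hSne : ∀ k i, (S k i).Nonempty)
    (hSbud : ∀ k i, (S k i).sum cost ≤ B)
    (hff : ∀ k, ∀ i' i'' : Fin (m k), i' < i'' → ∀ x ∈ S k i'',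
        (S k i').sum cost + cost x > B)
    (OPT : ℕ)
    (hOPT : IsLeast {n : ℕ | ∃ D : Fin n → Finset α,
        (∀ j ∈ J, ∃! i, j ∈ D i) ∧ (∀ i, D i ⊆ J) ∧
        (∀ i, (D i).sum cost ≤ B) ∧
        (∀ i, ∀ a ∈ D i, ∀ b ∈ D i, a ≠ b →
          Disjoint (Set.Icc (lo a) (up a)) (Set.Icc (lo b) (up b)))} OPT) :
    (∑ k, (m k : ℝ)) ≤
      (OPT : ℝ) / (1 - min (1/2) ((1/B) * J.sup' hJ cost))
      + (ω : ℝ) * (1 - ((1/B) * J.inf' hJ cost)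
          / (1 - min (1/2) ((1/B) * J.sup' hJ cost))) := by
  classical
  set Mx := J.sup' hJ cost with hMx
  set mn := J.inf' hJ cost with hmn
  set e := min (1/2 : ℝ) ((1/B) * Mx) with he
  obtain ⟨j0, hj0⟩ := hJ
  have hmnB : mn ≤ B := le_trans (Finset.inf'_le cost hj0) (hcost j0 hj0).2
  have hmnpos : 0 < mn := by
    rw [hmn]; refine (Finset.lt_inf'_iff _).mpr ?_
    exact fun j hj => (hcost j hj).1
  have he2 : e ≤ 1/2 := min_le_left _ _
  have hea : (0:ℝ) < 1 - e := by linarith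
  -- every color class is nonempty, hence m k ≥ 1
  have hm1 : ∀ k, 1 ≤ m k := by
    intro k
    obtain ⟨S0, hS0J, hcard, hconf⟩ := hω.1
    haveI : Nonempty (Fin ω) := ⟨k⟩
    set g : α → Fin ω := fun s =>
      if h : s ∈ J then (hCpart s h).choose else Classical.arbitrary _ with hg
    have hgmem : ∀ s ∈ J, s ∈ C (g s) := by
      intro s hs
      simp only [hg, dif_pos hs]
      exact (hCpart s hs).choose_spec.1
    have hinj : Set.InjOn g ↑S0 := by
      intro s hs t ht hst
      by_contra hne
      exact hconf s hs t ht hne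
        (hCcomp (g s) s (hgmem s (hS0J hs)) t (hst ▸ hgmem t (hS0J ht)) hne)
    have himg : S0.image g = Finset.univ := by
      apply Finset.eq_univ_of_card
      rw [Finset.card_image_of_injOn hinj, hcard, Fintype.card_fin]
    have hk : k ∈ S0.image g := himg ▸ Finset.mem_univ k
    obtain ⟨s, hs, hsk⟩ := Finset.mem_image.mp hk
    obtain ⟨i, -, -⟩ := hSpart k s (hsk ▸ hgmem s (hS0J hs))
    exact i.pos
  -- per-class lower bound on the total cost
  have key : ∀ k, ((m k : ℝ) - 1) * ((1 - e) * B) + mn ≤ (C k).sum cost := by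
    intro k
    have hfill_lb : ∀ i, mn ≤ (S k i).sum cost := by
      intro i
      obtain ⟨x, hx⟩ := hSne k i
      calc mn ≤ cost x := Finset.inf'_le cost (hCsub k (hSsub k i hx))
        _ ≤ (S k i).sum cost := Finset.single_le_sum
            (fun j hj => le_of_lt (hcost j (hCsub k (hSsub k i hj))).1) hx
    have hsum : ∑ i, (S k i).sum cost = (C k).sum cost :=
      sum_part (C k) (S k) (hSpart k) (hSsub k) cost
    rw [← hsum]
    have hpair : ∀ i i' : Fin (m k), i ≠ i' →
        B < (S k i).sum cost + (S k i').sum cost := by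
      intro i i' hne
      rcases lt_or_gt_of_ne hne with h | h
      · obtain ⟨x, hx⟩ := hSne k i'
        have h1 := hff k i i' h x hx
        have hx' : cost x ≤ (S k i').sum cost := Finset.single_le_sum
            (fun j hj => le_of_lt (hcost j (hCsub k (hSsub k i' hj))).1) hx
        linarith
      · obtain ⟨x, hx⟩ := hSne k i
        have h1 := hff k i' i h x hx
        have hx' : cost x ≤ (S k i).sum cost := Finset.single_le_sum
            (fun j hj => le_of_lt (hcost j (hCsub k (hSsub k i hj))).1) hx
        linarith
    rcases Nat.lt_or_ge (m k) 2 with hm2 | hm2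
    · -- m k = 1
      have hm : m k = 1 := le_antisymm (by omega) (hm1 k)
      have hlb : (m k : ℝ) * mn ≤ ∑ i, (S k i).sum cost := by
        have h := Finset.card_nsmul_le_sum Finset.univ
          (fun i => (S k i).sum cost) mn (fun i _ => hfill_lb i)
        simpa [nsmul_eq_mul] using h
      have hc : ((m k : ℕ) : ℝ) = 1 := by rw [hm]; norm_num
      rw [hc] at hlb ⊢
      linarith
    · -- m k ≥ 2
      have hL : ∃ L : Fin (m k), ∀ i, i ≠ L → (1 - e) * B ≤ (S k i).sum cost := by
        rcases le_or_gt ((1/B) * Mx) (1/2 : ℝ) with hcase | hcase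
        · -- small costs: use the last bin
          have heq : e = (1/B) * Mx := min_eq_right hcase
          have heB : e * B = Mx := by
            rw [heq]; field_simp
          refine ⟨⟨m k - 1, by omega⟩, fun i hi => ?_⟩
          have hilt : i < (⟨m k - 1, by omega⟩ : Fin (m k)) := by
            have hiv : i.val ≠ m k - 1 := fun h => hi (Fin.ext h)
            have hlt := i.isLt
            exact Fin.lt_def.mpr (show i.val < m k - 1 by omega)
          obtain ⟨x, hx⟩ := hSne k ⟨m k - 1, by omega⟩
          have h1 := hff k i ⟨m k - 1, by omega⟩ hilt x hx
          have hxM : cost x ≤ Mx :=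
            Finset.le_sup' cost (hCsub k (hSsub k _ hx))
          nlinarith
        · -- big costs: use the min-fill bin
          have heq : e = 1/2 := min_eq_left (le_of_lt hcase)
          obtain ⟨L, -, hLmin⟩ := Finset.exists_min_image Finset.univ
            (fun i => (S k i).sum cost) ⟨⟨0, by omega⟩, Finset.mem_univ _⟩
          refine ⟨L, fun i hi => ?_⟩
          have h1 := hpair i L hi
          have h2 := hLmin i (Finset.mem_univ i)
          rw [heq]
          linarith
      obtain ⟨L, hLb⟩ := hL
      have hsplit : ∑ i ∈ (Finset.univ.erase L), (S k i).sum cost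
          + (S k L).sum cost = ∑ i, (S k i).sum cost :=
        Finset.sum_erase_add _ _ (Finset.mem_univ L)
      have hcarde : (Finset.univ.erase L).card = m k - 1 := by
        rw [Finset.card_erase_of_mem (Finset.mem_univ L), Finset.card_univ,
          Fintype.card_fin]
      have h2 : ((m k : ℝ) - 1) * ((1 - e) * B)
          ≤ ∑ i ∈ (Finset.univ.erase L), (S k i).sum cost := by
        have h := Finset.card_nsmul_le_sum (Finset.univ.erase L)
          (fun i => (S k i).sum cost) ((1 - e) * B)
          (fun i hi => hLb i (Finset.ne_of_mem_erase hi))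
        rw [hcarde] at h
        have hcast : ((m k - 1 : ℕ) : ℝ) = (m k : ℝ) - 1 := by
          have := hm1 k; push_cast [Nat.cast_sub this]; ring
        rw [nsmul_eq_mul, hcast] at h
        exact h
      have h3 := hfill_lb L
      linarith
  -- sum over classes, compare with OPT
  have hsumk : ∑ k, (((m k : ℝ) - 1) * ((1 - e) * B) + mn) ≤ ∑ k, (C k).sum cost :=
    Finset.sum_le_sum (fun k _ => key k)
  have hCsum : ∑ k, (C k).sum cost = J.sum cost := sum_part J C hCpart hCsub cost
  obtain ⟨D, hD1, hD2, hD3, -⟩ := hOPT.1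
  have hJD : J.sum cost = ∑ i, (D i).sum cost := (sum_part J D hD1 hD2 cost).symm
  have hOPTb : J.sum cost ≤ (OPT : ℝ) * B := by
    rw [hJD]
    calc ∑ i, (D i).sum cost ≤ ∑ _i : Fin OPT, B :=
          Finset.sum_le_sum (fun i _ => hD3 i)
      _ = (OPT : ℝ) * B := by
          rw [Finset.sum_const, Finset.card_univ, Fintype.card_fin, nsmul_eq_mul]
  have hexp : ∑ k, (((m k : ℝ) - 1) * ((1 - e) * B) + mn)
      = (∑ k, (m k : ℝ) - ω) * ((1 - e) * B) + ω * mn := by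
    rw [Finset.sum_add_distrib, Finset.sum_const, Finset.card_univ, Fintype.card_fin,
      ← Finset.sum_mul, Finset.sum_sub_distrib, Finset.sum_const, Finset.card_univ,
      Fintype.card_fin, nsmul_eq_mul]
    ring
  have hLHS : (∑ k, (m k : ℝ) - ω) * ((1 - e) * B) + (ω : ℝ) * mn ≤ (OPT : ℝ) * B := by
    rw [← hexp]
    linarith [hCsum ▸ hsumk]
  -- final algebra
  have hmain : (∑ k, (m k : ℝ))
      ≤ ((OPT : ℝ) + (ω : ℝ) * (1 - e) - (ω : ℝ) * ((1/B) * mn)) / (1 - e) := by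
    rw [le_div_iff₀ hea]
    have hBB : (1/B) * mn * B = mn := by field_simp
    nlinarith [hLHS, hB]
  calc (∑ k, (m k : ℝ))
      ≤ ((OPT : ℝ) + (ω : ℝ) * (1 - e) - (ω : ℝ) * ((1/B) * mn)) / (1 - e) := hmain
    _ = (OPT : ℝ) / (1 - e) + (ω : ℝ) * (1 - ((1/B) * mn) / (1 - e)) := by
        field_simp
        ring
end

section
/- With the notation of the coloring-plus-first-fit algorithm for the drone delivery packing problem without battery stations (DDP-NS): the number of drones used by the algorithm is at most (2 + (ε_max − ε_min)/(1 − ε_max))·OPT, where OPT is the optimal number of drones, ε_min = (1/B)·min_j cost(I_j), and ε_max = min(1/2, (1/B)·max_j cost(I_j)). -/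
open Finset

lemma part_sum {α ι M : Type*} [DecidableEq α] [Fintype ι] [AddCommMonoid M]
    {A : Finset α} {P : ι → Finset α}
    (h1 : ∀ j ∈ A, ∃! i, j ∈ P i) (h2 : ∀ i, P i ⊆ A) (f : α → M) :
    A.sum f = ∑ i, (P i).sum f := by
  have hA : A = Finset.univ.biUnion P := by
    ext j
    simp only [Finset.mem_biUnion, Finset.mem_univ, true_and]
    exact ⟨fun hj => (h1 j hj).exists, fun ⟨i, hi⟩ => h2 i hi⟩
  rw [hA, Finset.sum_biUnion]
  intro i _ i' _ hne
  rw [Function.onFun, Finset.disjoint_left]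
  intro a ha ha'
  exact hne ((h1 a (h2 i ha)).unique ha ha')

/-- intervals `[lo j, up j]` with costs in `(0, B]`, partitioned
into `ω` compatible color classes `C k` (`ω` = maximum number of pairwise
conflicting intervals).  Each class `C k` is packed by first-fit (encoded by
its structural property) into `m k` capacity-`B` bins.  `OPT` is the minimum
number of drones (feasible assignments: pairwise disjoint intervals, total
cost ≤ B) covering all intervals.  Then
the number of drones used, `Σ_k m k`, is at most
`(2 + (ε_max − ε_min)/(1 − ε_max))·OPT`. -/
theorem stmt7 {α : Type*} [DecidableEq α] (B : ℝ) (hB : 0 < B)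
    (J : Finset α) (hJ : J.Nonempty) (lo up cost : α → ℝ)
    (hcost : ∀ j ∈ J, 0 < cost j ∧ cost j ≤ B)
    (ω : ℕ)
    (hω : IsGreatest {c : ℕ | ∃ S ⊆ J, S.card = c ∧
        ∀ i ∈ S, ∀ j ∈ S, i ≠ j →
          ¬ Disjoint (Set.Icc (lo i) (up i)) (Set.Icc (lo j) (up j))} ω)
    (C : Fin ω → Finset α)
    (hCpart : ∀ j ∈ J, ∃! k, j ∈ C k) (hCsub : ∀ k, C k ⊆ J)
    (hCcomp : ∀ k, ∀ i ∈ C k, ∀ j ∈ C k, i ≠ j →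
        Disjoint (Set.Icc (lo i) (up i)) (Set.Icc (lo j) (up j)))
    (m : Fin ω → ℕ) (S : (k : Fin ω) → Fin (m k) → Finset α)
    (hSpart : ∀ k, ∀ j ∈ C k, ∃! i, j ∈ S k i)
    (hSsub : ∀ k i, S k i ⊆ C k)
    (hSne : ∀ k i, (S k i).Nonempty)
    (hSbud : ∀ k i, (S k i).sum cost ≤ B)
    (hff : ∀ k, ∀ i' i'' : Fin (m k), i' < i'' → ∀ x ∈ S k i'',
        (S k i').sum cost + cost x > B)
    (OPT : ℕ)
    (hOPT : IsLeast {n : ℕ | ∃ D : Fin n → Finset α,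
        (∀ j ∈ J, ∃! i, j ∈ D i) ∧ (∀ i, D i ⊆ J) ∧
        (∀ i, (D i).sum cost ≤ B) ∧
        (∀ i, ∀ a ∈ D i, ∀ b ∈ D i, a ≠ b →
          Disjoint (Set.Icc (lo a) (up a)) (Set.Icc (lo b) (up b)))} OPT) :
    (∑ k, (m k : ℝ)) ≤
      (2 + (min (1/2) ((1/B) * J.sup' hJ cost) - (1/B) * J.inf' hJ cost)
          / (1 - min (1/2) ((1/B) * J.sup' hJ cost))) * OPT := by
  obtain ⟨D, hD1, hD2, hD3, hD4⟩ := hOPT.1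
  simp only [one_div_mul_eq_div]
  set U : ℝ := J.sup' hJ cost with hUdef
  set I : ℝ := J.inf' hJ cost with hIdef
  set E : ℝ := min (1/2) (U / B) with hEdef
  -- basic facts
  have hIle : ∀ j ∈ J, I ≤ cost j := fun j hj => Finset.inf'_le _ hj
  have hUge : ∀ j ∈ J, cost j ≤ U := fun j hj => Finset.le_sup' _ hj
  have hpos : ∀ j ∈ J, 0 < cost j := fun j hj => (hcost j hj).1
  obtain ⟨j₀, hj₀⟩ := hJ
  have hIpos : 0 < I := by
    obtain ⟨j, hj, he⟩ := Finset.exists_mem_eq_inf' (⟨j₀, hj₀⟩ : J.Nonempty) cost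
    have := hpos j hj
    have h2 : I = cost j := he
    linarith
  have hIB : I ≤ B := (hIle j₀ hj₀).trans (hcost j₀ hj₀).2
  have hE2 : E ≤ 1/2 := min_le_left _ _
  have hc : (0:ℝ) < 1 - E := by linarith
  have hcast : ∀ (A : Finset α), A ⊆ J → (0:ℝ) ≤ A.sum cost := by
    intro A hA
    exact Finset.sum_nonneg fun j hj => (hpos j (hA hj)).le
  -- total cost bounded by OPT * B
  have hTD : J.sum cost = ∑ i, (D i).sum cost := part_sum hD1 hD2 cost
  have hT_OPT : J.sum cost ≤ (OPT : ℝ) * B := by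
    rw [hTD]
    calc ∑ i, (D i).sum cost ≤ ∑ _i : Fin OPT, B := Finset.sum_le_sum fun i _ => hD3 i
      _ = (OPT : ℝ) * B := by simp [mul_comm]
  have hTC : J.sum cost = ∑ k, (C k).sum cost := part_sum hCpart hCsub cost
  by_cases hcase : I / B ≤ 1 - E
  · -- main case
    -- ω ≤ OPT
    have hωOPT : ω ≤ OPT := by
      obtain ⟨Sc, hScJ, hSccard, hScconf⟩ := hω.1
      have hOPTpos : 0 < OPT := by
        obtain ⟨i, _⟩ := (hD1 j₀ hj₀).exists
        exact i.pos
      haveI : Nonempty (Fin OPT) := ⟨⟨0, hOPTpos⟩⟩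
      have : Sc.card ≤ (Finset.univ : Finset (Fin OPT)).card := by
        apply Finset.card_le_card_of_injOn
          (fun j => if h : ∃ i, j ∈ D i then h.choose else Classical.arbitrary _)
          (fun _ _ => Finset.mem_univ _)
        intro a ha b hb hab
        by_contra hne
        have hea : ∃ i, a ∈ D i := (hD1 a (hScJ ha)).exists
        have heb : ∃ i, b ∈ D i := (hD1 b (hScJ hb)).exists
        simp only at hab
        rw [dif_pos hea, dif_pos heb] at hab
        have hda := hea.choose_spec
        have hdb := heb.choose_spec
        rw [hab] at hda
        exact hScconf a ha b hb hne (hD4 _ a hda b hdb hne)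
      simpa [hSccard] using this
    set x : ℝ := (1 - E) - I / B with hxdef
    have hx0 : 0 ≤ x := by rw [hxdef]; linarith
    -- per-class inequality
    have hclass : ∀ k, (m k : ℝ) * ((1 - E) * B) ≤ (C k).sum cost + x * B := by
      intro k
      have hTks : (C k).sum cost = ∑ i : Fin (m k), (S k i).sum cost :=
        part_sum (hSpart k) (hSsub k) cost
      set n := m k with hn
      set s' : ℕ → ℝ := fun i => if h : i < n then (S k ⟨i, h⟩).sum cost else 0 with hs'
      have hT' : (C k).sum cost = ∑ i ∈ Finset.range n, s' i := by
        rw [hTks, Finset.sum_congr rfl (fun (i : Fin n) _ =>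
          show (S k i).sum cost = s' i.1 by rw [hs']; simp only []; rw [dif_pos i.2]),
          Fin.sum_univ_eq_sum_range]
      have hsge : ∀ h : ℕ, ∀ hh : h < n, I ≤ s' h := by
        intro h hh
        obtain ⟨y, hy⟩ := hSne k ⟨h, hh⟩
        have hyJ : y ∈ J := hCsub k (hSsub k _ hy)
        rw [hs']; simp only []; rw [dif_pos hh]
        calc I ≤ cost y := hIle y hyJ
          _ ≤ (S k ⟨h, hh⟩).sum cost :=
            Finset.single_le_sum (fun j hj => (hpos j (hCsub k (hSsub k _ hj))).le) hy
      rcases Nat.eq_zero_or_pos n with hn0 | hn1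
      · rw [hn0]
        have := hcast (C k) (hCsub k)
        simp only [Nat.cast_zero, zero_mul]
        nlinarith
      · -- claim : ((n:ℝ) - 1) * ((1-E)*B) + I ≤ (C k).sum cost
        have hsplit : (C k).sum cost = (∑ i ∈ Finset.range (n-1), s' i) + s' (n-1) := by
          rw [hT']
          conv_lhs => rw [show n = (n-1) + 1 by omega]
          rw [Finset.sum_range_succ]
        have hlast : I ≤ s' (n-1) := hsge _ (by omega)
        have claim : ((n:ℝ) - 1) * ((1 - E) * B) + I ≤ (C k).sum cost := by
          by_cases hU : U ≤ B / 2
          · have hE' : E = U / B := by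
              rw [hEdef]
              exact min_eq_right (by rw [div_le_div_iff₀ hB (by norm_num)]; linarith)
            have key : ∀ i ∈ Finset.range (n-1), B - U ≤ s' i := by
              intro i hi
              have hi1 : i < n - 1 := Finset.mem_range.mp hi
              have hi' : i < n := by omega
              have hlt : n - 1 < n := by omega
              obtain ⟨y, hy⟩ := hSne k ⟨n-1, hlt⟩
              have := hff k ⟨i, hi'⟩ ⟨n-1, hlt⟩ (by simp [Fin.lt_def]; omega) y hy
              have hyU : cost y ≤ U := hUge y (hCsub k (hSsub k _ hy))
              rw [hs']; simp only []; rw [dif_pos hi']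
              linarith
            have hsum1 : (Finset.range (n-1)).card • (B - U) ≤ ∑ i ∈ Finset.range (n-1), s' i :=
              Finset.card_nsmul_le_sum _ _ _ key
            rw [Finset.card_range, nsmul_eq_mul] at hsum1
            have hncast : ((n - 1 : ℕ) : ℝ) = (n : ℝ) - 1 := by
              rw [Nat.cast_sub hn1]; norm_num
            rw [hncast] at hsum1
            have hrw : (1 - E) * B = B - U := by
              rw [hE']; field_simp
            rw [hrw]
            linarith [hsplit]
          · have hE' : E = 1/2 := by
              rw [hEdef]
              exact min_eq_left (by rw [div_le_div_iff₀ (by norm_num) hB]; linarith)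
            have key : ∀ i ∈ Finset.range (n-1), B ≤ s' i + s' (i+1) := by
              intro i hi
              have hi1 : i < n - 1 := Finset.mem_range.mp hi
              have hi' : i < n := by omega
              have hi'' : i + 1 < n := by omega
              obtain ⟨y, hy⟩ := hSne k ⟨i+1, hi''⟩
              have := hff k ⟨i, hi'⟩ ⟨i+1, hi''⟩ (by simp [Fin.lt_def]) y hy
              have hyle : cost y ≤ (S k ⟨i+1, hi''⟩).sum cost :=
                Finset.single_le_sum (fun j hj => (hpos j (hCsub k (hSsub k _ hj))).le) hy
              rw [hs']; simp only []; rw [dif_pos hi', dif_pos hi'']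
              linarith
            have hsum1 : (Finset.range (n-1)).card • B ≤
                ∑ i ∈ Finset.range (n-1), (s' i + s' (i+1)) :=
              Finset.card_nsmul_le_sum _ _ _ key
            rw [Finset.card_range, nsmul_eq_mul, Finset.sum_add_distrib] at hsum1
            have hshift : ∑ i ∈ Finset.range (n-1), s' (i+1) =
                (C k).sum cost - s' 0 := by
              rw [hT']
              conv_rhs => rw [show n = (n-1) + 1 by omega]
              rw [Finset.sum_range_succ' s' (n-1)]
              ring
            have hfirst : I ≤ s' 0 := hsge _ (by omega)
            have hncast : ((n - 1 : ℕ) : ℝ) = (n : ℝ) - 1 := by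
              rw [Nat.cast_sub hn1]; norm_num
            rw [hncast, hshift] at hsum1
            have h1 : ∑ i ∈ Finset.range (n-1), s' i = (C k).sum cost - s' (n-1) := by
              linarith [hsplit]
            rw [h1] at hsum1
            rw [hE']
            nlinarith
        have hxB : x * B = (1 - E) * B - I := by
          rw [hxdef, sub_mul, div_mul_cancel₀ _ hB.ne']
        rw [hxB]
        nlinarith [claim]
    -- sum the per-class inequalities
    have hsum : (∑ k, (m k : ℝ)) * ((1 - E) * B) ≤ J.sum cost + (ω : ℝ) * (x * B) := by
      rw [Finset.sum_mul, hTC]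
      calc ∑ k, (m k : ℝ) * ((1 - E) * B) ≤ ∑ k, ((C k).sum cost + x * B) :=
            Finset.sum_le_sum fun k _ => hclass k
        _ = (∑ k, (C k).sum cost) + (ω : ℝ) * (x * B) := by
            rw [Finset.sum_add_distrib, Finset.sum_const]
            simp [nsmul_eq_mul]
    have hωcast : (ω : ℝ) ≤ (OPT : ℝ) := Nat.cast_le.mpr hωOPT
    have step : (∑ k, (m k : ℝ)) * ((1 - E) * B) ≤ (OPT : ℝ) * B + (OPT : ℝ) * (x * B) := by
      have h2 : (ω : ℝ) * (x * B) ≤ (OPT : ℝ) * (x * B) :=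
        mul_le_mul_of_nonneg_right hωcast (by positivity)
      linarith
    have step2 : (∑ k, (m k : ℝ)) * (1 - E) ≤ (OPT : ℝ) * (1 + x) := by
      rw [← mul_le_mul_iff_of_pos_right hB]
      calc (∑ k, (m k : ℝ)) * (1 - E) * B = (∑ k, (m k : ℝ)) * ((1 - E) * B) := by ring
        _ ≤ (OPT : ℝ) * B + (OPT : ℝ) * (x * B) := step
        _ = (OPT : ℝ) * (1 + x) * B := by ring
    have hco : (2 + (E - I / B) / (1 - E)) = (1 + x) / (1 - E) := by
      rw [hxdef]; field_simp; ring
    rw [hco, div_mul_eq_mul_div, le_div_iff₀ hc]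
    linarith
  · -- big-items case: every bin/drone holds exactly one interval
    have hI2 : B / 2 < I := by
      have h12 : (1:ℝ)/2 < I / B := by linarith
      rw [lt_div_iff₀ hB] at h12
      linarith
    have hbig : ∀ j ∈ J, B / 2 < cost j := fun j hj => lt_of_lt_of_le hI2 (hIle j hj)
    have hcard1 : ∀ (A : Finset α), A ⊆ J → A.sum cost ≤ B → A.card ≤ 1 := by
      intro A hA hAB
      rw [Finset.card_le_one]
      intro a ha b hb
      by_contra hne
      have hsum : cost a + cost b ≤ A.sum cost :=
        Finset.add_le_sum (fun i hi => (hpos i (hA hi)).le) ha hb hne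
      have := hbig a (hA ha)
      have := hbig b (hA hb)
      linarith
    have hScard : ∀ k i, (S k i).card = 1 := by
      intro k i
      exact le_antisymm
        (hcard1 _ ((hSsub k i).trans (hCsub k)) (hSbud k i))
        (hSne k i).card_pos
    have hmk : ∀ k, (C k).card = m k := by
      intro k
      rw [Finset.card_eq_sum_ones, part_sum (hSpart k) (hSsub k) (fun _ => 1)]
      simp only [← Finset.card_eq_sum_ones, hScard]
      simp
    have hJC : J.card = ∑ k, (C k).card := by
      rw [Finset.card_eq_sum_ones, part_sum hCpart hCsub (fun _ => 1)]
      simp [← Finset.card_eq_sum_ones]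
    have hJOPT : J.card ≤ OPT := by
      have : J.card = ∑ i, (D i).card := by
        rw [Finset.card_eq_sum_ones, part_sum hD1 hD2 (fun _ => 1)]
        simp [← Finset.card_eq_sum_ones]
      rw [this]
      calc ∑ i, (D i).card ≤ ∑ _i : Fin OPT, 1 :=
            Finset.sum_le_sum fun i _ => hcard1 _ (hD2 i) (hD3 i)
        _ = OPT := by simp
    have hMJ : (∑ k, (m k : ℝ)) = (J.card : ℝ) := by
      rw [hJC]
      push_cast
      exact Finset.sum_congr rfl fun k _ => by rw [hmk k]
    have he1 : I / B ≤ 1 := by rw [div_le_one hB]; exact hIB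
    have hcoeff : (1:ℝ) ≤ 2 + (E - I / B) / (1 - E) := by
      have : (-1 : ℝ) ≤ (E - I / B) / (1 - E) := by
        rw [le_div_iff₀ hc]
        linarith
      linarith
    rw [hMJ]
    calc (J.card : ℝ) ≤ (OPT : ℝ) := Nat.cast_le.mpr hJOPT
      _ ≤ (2 + (E - I / B) / (1 - E)) * OPT :=
        le_mul_of_one_le_left (Nat.cast_nonneg _) hcoeff
end

section
/- Suppose the delivery interval set ℐ is split into subsets ℐ_1, …, ℐ_{r+1} according to charging-station arrival times: ℐ_ℓ contains all intervals whose launch time lies in [t_{ℓ−1}^A, t_ℓ^A) (with appropriate conventions at the ends), and no interval is fully contained in a waiting interval. Then in any feasible solution of the packing problem with recharging (each drone may fully recharge only at stations, and each assignment has total cost at most B between recharges), the number of bins of an optimal 'block partition' of each ℐ_ℓ is at most the optimal number of drones: OPT_ℓ ≤ OPT, for every ℓ. -/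
/-- delivery intervals `[tL j, tR j]` with costs in `(0, B]`;
stations `ℓ = 1, …, r` with waiting intervals `[tA ℓ, tD ℓ]` (ordered along
the route); no delivery interval is contained in a waiting interval.
`Iℓ ℓ` (for `1 ≤ ℓ ≤ r+1`) is the set of deliveries whose launch time lies in
`[tA (ℓ−1), tA ℓ)` (with the obvious conventions at the ends).  `OPT` is the
minimum number of drones in a feasible solution with recharging: each drone
gets a set of pairwise disjoint delivery intervals plus a set of recharge
stations whose waiting intervals it does not conflict with, and any
recharge-free sub-collection of its deliveries has total cost at most `B`.
`OPTb ℓ` is the minimum number of blocks (subsets of total cost ≤ B)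
partitioning `Iℓ ℓ`.  Then `OPTb ℓ ≤ OPT` for every `ℓ`. -/
theorem stmt8 {α : Type*} [DecidableEq α] (B : ℝ) (hB : 0 < B)
    (J : Finset α) (tL tR cost : α → ℝ)
    (hInt : ∀ j ∈ J, tL j < tR j)
    (hcost : ∀ j ∈ J, 0 < cost j ∧ cost j ≤ B)
    (r : ℕ) (tA tD : ℕ → ℝ)
    (hst : ∀ ℓ, 1 ≤ ℓ → ℓ ≤ r → tA ℓ < tD ℓ)
    (hord : ∀ ℓ, 1 ≤ ℓ → ℓ + 1 ≤ r → tD ℓ < tA (ℓ + 1))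
    (hnc : ∀ j ∈ J, ∀ ℓ, 1 ≤ ℓ → ℓ ≤ r → ¬ (tA ℓ ≤ tL j ∧ tR j ≤ tD ℓ))
    (Iℓ : ℕ → Finset α)
    (hIℓ : ∀ ℓ, 1 ≤ ℓ → ℓ ≤ r + 1 → ∀ j, (j ∈ Iℓ ℓ ↔ j ∈ J ∧
        (ℓ = 1 ∨ tA (ℓ - 1) ≤ tL j) ∧ (ℓ = r + 1 ∨ tL j < tA ℓ)))
    (OPT : ℕ)
    (hOPT : IsLeast {n : ℕ | ∃ (D : Fin n → Finset α) (Rc : Fin n → Finset ℕ),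
        (∀ j ∈ J, ∃! i, j ∈ D i) ∧ (∀ i, D i ⊆ J) ∧
        (∀ i, ∀ ℓ ∈ Rc i, 1 ≤ ℓ ∧ ℓ ≤ r) ∧
        (∀ i, ∀ a ∈ D i, ∀ b ∈ D i, a ≠ b →
          Disjoint (Set.Icc (tL a) (tR a)) (Set.Icc (tL b) (tR b))) ∧
        (∀ i, ∀ ℓ ∈ Rc i, ∀ j ∈ D i,
          Disjoint (Set.Icc (tL j) (tR j)) (Set.Icc (tA ℓ) (tD ℓ))) ∧
        (∀ i, ∀ S ⊆ D i,
          (¬ ∃ ℓ ∈ Rc i, ∃ a ∈ S, ∃ b ∈ S, tR a ≤ tA ℓ ∧ tD ℓ ≤ tL b) →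
          S.sum cost ≤ B)} OPT)
    (OPTb : ℕ → ℕ)
    (hOPTb : ∀ ℓ, 1 ≤ ℓ → ℓ ≤ r + 1 →
        IsLeast {n : ℕ | ∃ Bl : Fin n → Finset α,
          (∀ j ∈ Iℓ ℓ, ∃! i, j ∈ Bl i) ∧ (∀ i, Bl i ⊆ Iℓ ℓ) ∧
          (∀ i, (Bl i).sum cost ≤ B)} (OPTb ℓ)) :
    ∀ ℓ, 1 ≤ ℓ → ℓ ≤ r + 1 → OPTb ℓ ≤ OPT := by

  intro ℓ h1 hℓ
  have mono : ∀ ℓ1 ℓ2, 1 ≤ ℓ1 → ℓ1 ≤ ℓ2 → ℓ2 ≤ r → tA ℓ1 ≤ tA ℓ2 := by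
    intro ℓ1 ℓ2 h1 h12 h2
    induction ℓ2 with
    | zero => omega
    | succ k ih =>
      rcases Nat.lt_or_ge ℓ1 (k+1) with h | h
      · have hk1 : 1 ≤ k := by omega
        calc tA ℓ1 ≤ tA k := ih (by omega) (by omega)
          _ ≤ tD k := le_of_lt (hst k hk1 (by omega))
          _ ≤ tA (k+1) := le_of_lt (hord k hk1 h2)
      · have : ℓ1 = k+1 := by omega
        simp [this]
  obtain ⟨⟨D, Rc, hpart, hsub, hRc, _, _, hcostB⟩, _⟩ := hOPT
  apply (hOPTb ℓ h1 hℓ).2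
  refine ⟨fun i => (D i) ∩ Iℓ ℓ, ?_, fun i => Finset.inter_subset_right, ?_⟩
  · intro j hj
    have hjJ : j ∈ J := ((hIℓ ℓ h1 hℓ j).mp hj).1
    obtain ⟨i, hi, hiu⟩ := hpart j hjJ
    exact ⟨i, Finset.mem_inter.mpr ⟨hi, hj⟩,
      fun i' hi' => hiu i' (Finset.mem_inter.mp hi').1⟩
  · intro i
    apply hcostB i _ Finset.inter_subset_left
    rintro ⟨ℓ', hℓ', a, ha, b, hb, hra, hlb⟩
    obtain ⟨h1', hr'⟩ := hRc i ℓ' hℓ'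
    have haI := (hIℓ ℓ h1 hℓ a).mp (Finset.mem_inter.mp ha).2
    have hbI := (hIℓ ℓ h1 hℓ b).mp (Finset.mem_inter.mp hb).2
    have haJ := haI.1
    have hlt_a := hInt a haJ
    have hAD' := hst ℓ' h1' hr'
    rcases hbI.2.2 with hb1 | hb2
    · -- ℓ = r + 1
      rcases haI.2.1 with ha1 | ha2
      · omega
      · have h1 : tA ℓ' ≤ tA r := mono ℓ' r h1' hr' le_rfl
        have : ℓ - 1 = r := by omega
        rw [this] at ha2
        linarith
    · -- tL b < tA ℓ
      have hℓ'ℓ : ℓ' < ℓ := by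
        by_contra hcon
        have hle : ℓ ≤ ℓ' := by omega
        have := mono ℓ ℓ' h1 hle hr'
        linarith
      rcases haI.2.1 with ha1 | ha2
      · omega
      · have h1 : tA ℓ' ≤ tA (ℓ - 1) := mono ℓ' (ℓ - 1) h1' (by omega) (by omega)
        linarith
end

section
/- Let OPT = 2t (t ≥ 1 an integer) be the optimal number of capacity-B bins for a multiset of items, and suppose FFD produces exactly 3t bins S_1, …, S_{3t} (so FFD achieves its worst absolute ratio 3/2). Then for every FFD bin S_i and every optimal bin T_j, cost(S_i) ≤ cost(T_j). -/
open List

namespace Stmt10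

lemma length_le_ffInsert (B x : ℝ) : ∀ bs : List (List ℝ), bs.length ≤ (ffInsert B x bs).length
  | [] => by simp [ffInsert]
  | b :: bs => by
    rw [ffInsert]
    split
    · simp
    · simpa using length_le_ffInsert B x bs

lemma length_ffInsert_le (B x : ℝ) : ∀ bs : List (List ℝ), (ffInsert B x bs).length ≤ bs.length + 1
  | [] => by simp [ffInsert]
  | b :: bs => by
    rw [ffInsert]
    split
    · simp
    · simpa using length_ffInsert_le B x bs

lemma ffInsert_flatten_perm (B x : ℝ) :
    ∀ bs : List (List ℝ), (ffInsert B x bs).flatten.Perm (x :: bs.flatten)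
  | [] => by simp [ffInsert]
  | b :: bs => by
    rw [ffInsert]
    split
    · simp
    · simp only [flatten_cons]
      calc b ++ (ffInsert B x bs).flatten
          ~ b ++ (x :: bs.flatten) := (ffInsert_flatten_perm B x bs).append_left b
        _ ~ x :: (b ++ bs.flatten) := perm_middle

lemma ffInsert_sum_le {B x : ℝ} (hx : x ≤ B) :
    ∀ {bs : List (List ℝ)}, (∀ b ∈ bs, b.sum ≤ B) → ∀ b ∈ ffInsert B x bs, b.sum ≤ B
  | [], _ => by simpa [ffInsert] using hx
  | b :: bs, h => by
    rw [ffInsert]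
    split
    · rename_i hfit
      intro c hc
      rcases mem_cons.mp hc with rfl | hc
      · simpa [add_comm] using hfit
      · exact h c (mem_cons_of_mem _ hc)
    · intro c hc
      rcases mem_cons.mp hc with rfl | hc
      · exact h c (mem_cons_self)
      · exact ffInsert_sum_le hx (fun d hd => h d (mem_cons_of_mem _ hd)) c hc

lemma ffInsert_ne_nil {B x : ℝ} :
    ∀ {bs : List (List ℝ)}, (∀ b ∈ bs, b ≠ []) → ∀ b ∈ ffInsert B x bs, b ≠ []
  | [], _ => by simp [ffInsert]
  | b :: bs, h => by
    rw [ffInsert]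
    split
    · intro c hc
      rcases mem_cons.mp hc with rfl | hc
      · simp
      · exact h c (mem_cons_of_mem _ hc)
    · intro c hc
      rcases mem_cons.mp hc with rfl | hc
      · exact h c (mem_cons_self)
      · exact ffInsert_ne_nil (fun d hd => h d (mem_cons_of_mem _ hd)) c hc

lemma ffInsert_grow {B x : ℝ} :
    ∀ {bs : List (List ℝ)}, bs.length < (ffInsert B x bs).length →
      ffInsert B x bs = bs ++ [[x]] ∧ ∀ b ∈ bs, B < b.sum + x
  | [], _ => by simp [ffInsert]
  | b :: bs, h => by
    rw [ffInsert] at h ⊢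
    split at h
    · simp at h
    · rename_i hnofit
      push_neg at hnofit
      simp only [length_cons, Nat.succ_lt_succ_iff] at h
      obtain ⟨h1, h2⟩ := ffInsert_grow h
      rw [if_neg (not_le.mpr hnofit)]
      refine ⟨by rw [h1]; simp, ?_⟩
      intro c hc
      rcases mem_cons.mp hc with rfl | hc
      · exact hnofit
      · exact h2 c hc

lemma ffInsert_suffix (B x : ℝ) :
    ∀ (bs : List (List ℝ)) (j : ℕ) (c : List ℝ), bs[j]? = some c →
      ∃ d, (ffInsert B x bs)[j]? = some d ∧ c <:+ d
  | [], j, c => by simp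
  | b :: bs, j, c => by
    rw [ffInsert]
    split
    · intro h
      match j with
      | 0 =>
        refine ⟨x :: b, by simp, ?_⟩
        obtain rfl : b = c := by simpa using h
        exact suffix_cons x b
      | j + 1 => exact ⟨c, by simpa using h, suffix_rfl⟩
    · intro h
      match j with
      | 0 =>
        have hb : b = c := by simpa using h
        exact ⟨b, by simp, hb ▸ suffix_rfl⟩
      | j + 1 =>
        obtain ⟨d, hd, hs⟩ := ffInsert_suffix B x bs j c (by simpa using h)
        exact ⟨d, by simpa using hd, hs⟩


noncomputable abbrev ff (B : ℝ) : List (List ℝ) → ℝ → List (List ℝ) := fun bins x => ffInsert B x bins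

lemma foldl_flatten_perm (B : ℝ) :
    ∀ (l : List ℝ) (init : List (List ℝ)),
      (l.foldl (ff B) init).flatten.Perm (init.flatten ++ l)
  | [], init => by simp
  | x :: l, init => by
    simp only [foldl_cons]
    calc (l.foldl (ff B) (ffInsert B x init)).flatten
        ~ (ffInsert B x init).flatten ++ l := foldl_flatten_perm B l _
      _ ~ (x :: init.flatten) ++ l := ((ffInsert_flatten_perm B x init).append_right l)
      _ ~ init.flatten ++ x :: l := by
          simpa using (perm_middle (a := x) (l₁ := init.flatten) (l₂ := l)).symm

lemma foldl_sum_le {B : ℝ} :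
    ∀ {l : List ℝ} {init : List (List ℝ)}, (∀ y ∈ l, y ≤ B) →
      (∀ b ∈ init, b.sum ≤ B) → ∀ b ∈ l.foldl (ff B) init, b.sum ≤ B
  | [], init, _, h2 => h2
  | x :: l, init, h1, h2 => by
    simp only [foldl_cons]
    exact foldl_sum_le (fun y hy => h1 y (mem_cons_of_mem _ hy))
      (ffInsert_sum_le (h1 x (mem_cons_self)) h2)

lemma foldl_ne_nil {B : ℝ} :
    ∀ {l : List ℝ} {init : List (List ℝ)}, (∀ b ∈ init, b ≠ []) →
      ∀ b ∈ l.foldl (ff B) init, b ≠ []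
  | [], init, h2 => h2
  | x :: l, init, h2 => by
    simp only [foldl_cons]
    exact foldl_ne_nil (ffInsert_ne_nil h2)

lemma foldl_suffix {B : ℝ} :
    ∀ (l : List ℝ) (init : List (List ℝ)) (j : ℕ) (c : List ℝ), init[j]? = some c →
      ∃ d, (l.foldl (ff B) init)[j]? = some d ∧ c <:+ d
  | [], init, j, c, h => ⟨c, h, suffix_rfl⟩
  | x :: l, init, j, c, h => by
    obtain ⟨d, hd, hs⟩ := ffInsert_suffix B x init j c h
    obtain ⟨e, he, hs'⟩ := foldl_suffix l (ffInsert B x init) j d hd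
    exact ⟨e, by simpa using he, hs.trans hs'⟩

lemma foldl_length_le (B : ℝ) :
    ∀ (l : List ℝ) (init : List (List ℝ)), init.length ≤ (l.foldl (ff B) init).length
  | [], init => le_rfl
  | x :: l, init => by
    simp only [foldl_cons]
    exact (length_le_ffInsert B x init).trans (foldl_length_le B l _)

lemma firstFit_eq_foldl (B : ℝ) (l : List ℝ) : firstFit B l = l.foldl (ff B) [] := rfl

lemma firstFit_take_succ (B : ℝ) (l : List ℝ) (k : ℕ) (hk : k < l.length) :
    firstFit B (l.take (k + 1)) = ffInsert B (l[k]'hk) (firstFit B (l.take k)) := by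
  rw [firstFit_eq_foldl, firstFit_eq_foldl, take_succ, getElem?_eq_getElem hk]
  rw [foldl_append]
  rfl


lemma sum_split (s : List ℝ) (i : ℕ) (h : i < s.length) :
    s.sum = (s.take i).sum + s[i] + (s.drop (i + 1)).sum := by
  conv_lhs => rw [← sum_take_add_sum_drop s (i + 1)]
  rw [take_succ, getElem?_eq_getElem h, sum_append]
  simp

lemma take_mem_bound {s : List ℝ} {n : ℕ} {r : ℝ}
    (h : ∀ j (hj : j < n) (hj' : j < s.length), r ≤ s[j]) :
    ∀ x ∈ s.take n, r ≤ x := by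
  intro x hx
  rw [mem_take_iff_getElem] at hx
  obtain ⟨j, hj, rfl⟩ := hx
  exact h j (lt_of_lt_of_le hj (min_le_left _ _)) (lt_of_lt_of_le hj (min_le_right _ _))

lemma sum_ge_mul {s : List ℝ} {r : ℝ} (h : ∀ x ∈ s, r ≤ x) :
    (s.length : ℝ) * r ≤ s.sum := by
  simpa [nsmul_eq_mul] using card_nsmul_le_sum s r h

lemma sum_le_mul {s : List ℝ} {r : ℝ} (h : ∀ x ∈ s, x ≤ r) :
    s.sum ≤ (s.length : ℝ) * r := by
  simpa [nsmul_eq_mul] using sum_le_card_nsmul s r h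

end Stmt10


open Stmt10

/-- if the optimum uses `2t` bins (`t ≥ 1`) and FFD uses exactly
`3t` bins (worst absolute ratio `3/2`), then every FFD bin has total cost at
most that of every optimal bin. -/
theorem stmt10 (B : ℝ) (hB : 0 < B) (t : ℕ) (ht : 1 ≤ t) (items : List ℝ)
    (hitems : ∀ x ∈ items, 0 < x ∧ x ≤ B)
    (T : List (List ℝ)) (hT : IsPacking B items T)
    (hTopt : ∀ P, IsPacking B items P → T.length ≤ P.length)
    (hTlen : T.length = 2 * t)
    (hFFD : (FFD B items).length = 3 * t) :
    ∀ Si ∈ FFD B items, ∀ Tj ∈ T, Si.sum ≤ Tj.sum := by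
  classical
  set l := items.mergeSort (fun a b => decide (b ≤ a)) with hldef
  have hlp : l.Perm items := mergeSort_perm items _
  have hsort : l.Pairwise (fun a b => b ≤ a) := by
    have h := pairwise_mergeSort (le := fun a b : ℝ => decide (b ≤ a))
      (fun a b c hab hbc => by
        simp only [decide_eq_true_eq] at *; exact le_trans hbc hab)
      (fun a b => by simpa using le_total b a) items
    exact h.imp (fun hab => by simpa using hab)
  have hF : FFD B items = firstFit B l := rfl
  have hl : ∀ x ∈ l, 0 < x ∧ x ≤ B := fun x hx => hitems x (hlp.subset hx)
  have hFlen : (firstFit B l).length = 3 * t := by rw [← hF]; exact hFFD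
  -- minimal prefix opening the last bin
  have hex : ∃ k, 3 * t ≤ (firstFit B (l.take k)).length :=
    ⟨l.length, by rw [take_length]; exact hFlen.ge⟩
  set k₀ := Nat.find hex with hk₀def
  have hk₀spec : 3 * t ≤ (firstFit B (l.take k₀)).length := Nat.find_spec hex
  have hk₀le : k₀ ≤ l.length := Nat.find_min' hex (by rw [take_length]; exact hFlen.ge)
  have hk₀pos : 0 < k₀ := by
    rcases Nat.eq_zero_or_pos k₀ with h0 | h
    · exfalso
      rw [h0] at hk₀spec
      simp only [take_zero] at hk₀spec
      have : (firstFit B ([] : List ℝ)).length = 0 := rfl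
      omega
    · exact h
  set k₁ := k₀ - 1 with hk₁def
  have hk₁ : k₁ + 1 = k₀ := Nat.succ_pred_eq_of_pos hk₀pos
  have hk₁l : k₁ < l.length := by omega
  set w := l[k₁]'hk₁l with hwdef
  set mid' := firstFit B (l.take k₁) with hmid'def
  have hstep : firstFit B (l.take k₀) = ffInsert B w mid' := by
    rw [← hk₁]; exact firstFit_take_succ B l k₁ hk₁l
  have hmid'lt : mid'.length < 3 * t := by
    have h := Nat.find_min hex (show k₁ < k₀ by omega)
    rw [← hmid'def] at h
    omega
  have hgrow : ffInsert B w mid' = mid' ++ [[w]] ∧ ∀ b ∈ mid', B < b.sum + w := by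
    apply ffInsert_grow
    rw [← hstep]
    omega
  obtain ⟨hmid, hfull⟩ := hgrow
  have hlen' : mid'.length + 1 = 3 * t := by
    have h1 : (ffInsert B w mid').length ≤ mid'.length + 1 := length_ffInsert_le B w mid'
    have h2 : 3 * t ≤ (ffInsert B w mid').length := hstep ▸ hk₀spec
    omega
  have hmidlen : (mid' ++ [[w]]).length = 3 * t := by simpa using hlen'
  set F := firstFit B l with hFdef
  have hFfold : F = (l.drop k₀).foldl (ff B) (mid' ++ [[w]]) := by
    conv_lhs => rw [hFdef, firstFit_eq_foldl, ← take_append_drop k₀ l, foldl_append]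
    rw [← firstFit_eq_foldl, hstep, hmid]
  have hext : ∀ j (hj : j < 3 * t),
      ((mid' ++ [[w]])[j]'(by omega)) <:+ (F[j]'(by omega)) := by
    intro j hj
    obtain ⟨d, hd, hs⟩ := foldl_suffix (l.drop k₀) (mid' ++ [[w]]) j
      ((mid' ++ [[w]])[j]'(by omega)) (getElem?_eq_getElem (by omega))
    rw [← hFfold, getElem?_eq_getElem (show j < F.length by omega)] at hd
    obtain rfl : F[j]'(by omega) = d := Option.some.inj hd
    exact hs
  have hFperm : F.flatten.Perm l := by
    have h := foldl_flatten_perm B l []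
    simpa [hFdef, firstFit_eq_foldl] using h
  have hFmem : ∀ y ∈ F.flatten, 0 < y ∧ y ≤ B :=
    fun y hy => hl y (hFperm.subset hy)
  have hw : 0 < w ∧ w ≤ B := hl w (getElem_mem hk₁l)
  have hwle : ∀ i (hi : i < k₀) (hil : i < l.length), w ≤ l[i] := by
    intro i hi hil
    rcases Nat.lt_or_ge i k₁ with hlt | hge
    · exact pairwise_iff_getElem.mp hsort i k₁ hil hk₁l hlt
    · have : i = k₁ := by omega
      subst this
      exact le_refl _
  have hmid'perm : mid'.flatten.Perm (l.take k₁) := by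
    have h := foldl_flatten_perm B (l.take k₁) []
    simpa [hmid'def, firstFit_eq_foldl] using h
  have hmid'elem : ∀ c ∈ mid', ∀ y ∈ c, w ≤ y := by
    intro c hc y hy
    have hyp : y ∈ l.take k₁ := hmid'perm.subset (mem_flatten.mpr ⟨c, hc, hy⟩)
    rw [mem_take_iff_getElem] at hyp
    obtain ⟨i, hi, rfl⟩ := hyp
    exact hwle i (by omega) (lt_of_lt_of_le hi (min_le_right _ _))
  have hmid'ne : ∀ c ∈ mid', c ≠ [] := by
    intro c hc
    exact foldl_ne_nil (B := B) (l := l.take k₁) (init := []) (by simp) c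
      (by rw [← firstFit_eq_foldl, ← hmid'def]; exact hc)
  have hFslen : (F.map List.sum).length = 3 * t := by rw [length_map]; omega
  have hsget : ∀ j (hj : j < 3 * t),
      ((F.map List.sum)[j]'(by omega)) = (F[j]'(by omega)).sum :=
    fun j hj => getElem_map _
  have hbinpos : ∀ j (hj : j < 3 * t) (d : List ℝ), (∀ y ∈ d, y ∈ F[j]'(by omega)) →
      0 ≤ d.sum := by
    intro j hj d hd
    refine sum_nonneg (fun y hy => ?_)
    exact (hFmem y (mem_flatten.mpr ⟨F[j]'(by omega), getElem_mem _, hd y hy⟩)).1.le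
  have fact1 : ∀ j (hj : j < 3 * t - 1), B - w < (F.map List.sum)[j]'(by omega) := by
    intro j hj
    have hj3 : j < 3 * t := by omega
    have hjm : j < mid'.length := by omega
    have hmidj : ((mid' ++ [[w]])[j]'(by omega)) = mid'[j]'hjm := getElem_append_left hjm
    have hsfx := hext j hj3
    rw [hmidj] at hsfx
    obtain ⟨d, hd⟩ := hsfx
    have hdpos : 0 ≤ d.sum := by
      refine hbinpos j hj3 d (fun y hy => ?_)
      rw [← hd]
      exact mem_append_left _ hy
    have hfj : B < (mid'[j]'hjm).sum + w := hfull _ (getElem_mem hjm)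
    have hsum : (F[j]'(by omega)).sum = d.sum + (mid'[j]'hjm).sum := by
      rw [← hd, sum_append]
    rw [hsget j hj3]
    rw [hsum]
    linarith
  have fact2 : w ≤ (F.map List.sum)[3 * t - 1]'(by omega) := by
    have hj3 : 3 * t - 1 < 3 * t := by omega
    have hmidl : ((mid' ++ [[w]])[3 * t - 1]'(by omega)) = [w] := by
      rw [getElem_append_right (by omega)]
      have h0 : 3 * t - 1 - mid'.length = 0 := by omega
      simp [h0]
    have hsfx := hext (3 * t - 1) hj3
    rw [hmidl] at hsfx
    obtain ⟨d, hd⟩ := hsfx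
    have hdpos : 0 ≤ d.sum := by
      refine hbinpos (3 * t - 1) hj3 d (fun y hy => ?_)
      rw [← hd]
      exact mem_append_left _ hy
    have hsum : (F[3 * t - 1]'(by omega)).sum = d.sum + w := by
      rw [← hd, sum_append]
      simp
    rw [hsget _ hj3, hsum]
    linarith
  have hsumF : items.sum = (F.map List.sum).sum := by
    rw [← sum_flatten]
    exact ((hFperm.trans hlp).sum_eq).symm
  have hsumT : items.sum = (T.map List.sum).sum := by
    rw [← sum_flatten]
    exact (hT.1.sum_eq).symm
  have hTpos : ∀ b ∈ T, ∀ y ∈ b, 0 < y := by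
    intro b hb y hy
    exact (hitems y (hT.1.subset (mem_flatten.mpr ⟨b, hb, hy⟩))).1
  rcases le_or_gt (3 * w) B with hw3 | hw3
  · -- small w : direct proof
    rw [hF]
    intro Si hSi Tj hTj
    by_contra hcon
    push_neg at hcon
    obtain ⟨i, hi, rfl⟩ := mem_iff_getElem.mp hSi
    obtain ⟨j0, hj0, rfl⟩ := mem_iff_getElem.mp hTj
    have hi3 : i < 3 * t := by omega
    set c := (T[j0]'hj0).sum with hcdef
    -- upper bound from the optimal packing
    have hj0' : j0 < (T.map List.sum).length := by rw [length_map]; omega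
    have hTget : (T.map List.sum)[j0]'hj0' = c := getElem_map _
    have hTsplit : (T.map List.sum).sum
        = ((T.map List.sum).take j0).sum + c + ((T.map List.sum).drop (j0 + 1)).sum := by
      rw [← hTget]
      exact sum_split _ j0 hj0'
    have hTmem : ∀ x ∈ T.map List.sum, x ≤ B := by
      intro x hx
      obtain ⟨b, hb, rfl⟩ := mem_map.mp hx
      exact hT.2 b hb
    have hub1 : ((T.map List.sum).take j0).sum ≤ (((T.map List.sum).take j0).length : ℝ) * B :=
      sum_le_mul (fun x hx => hTmem x (mem_of_mem_take hx))
    have hub2 : ((T.map List.sum).drop (j0 + 1)).sum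
        ≤ (((T.map List.sum).drop (j0 + 1)).length : ℝ) * B :=
      sum_le_mul (fun x hx => hTmem x (mem_of_mem_drop hx))
    have hnT : ((T.map List.sum).take j0).length + ((T.map List.sum).drop (j0 + 1)).length + 1
        = 2 * t := by
      rw [length_take, length_drop, length_map]
      have hj0T : j0 < T.length := hj0
      omega
    have hprodT : ((((T.map List.sum).take j0).length : ℝ)) * B
        + ((((T.map List.sum).drop (j0 + 1)).length : ℝ)) * B = (2 * (t : ℝ) - 1) * B := by
      have hc2 : ((((T.map List.sum).take j0).length : ℝ))
          + ((((T.map List.sum).drop (j0 + 1)).length : ℝ)) = 2 * (t : ℝ) - 1 := by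
        have h : ((T.map List.sum).take j0).length + ((T.map List.sum).drop (j0 + 1)).length
            = 2 * t - 1 := by omega
        rw [show (2 * (t : ℝ) - 1 : ℝ) = ((2 * t - 1 : ℕ) : ℝ) by
          rw [Nat.cast_sub (by omega : 1 ≤ 2 * t)]; push_cast; ring, ← h]
        push_cast
        ring
      rw [← hc2]
      ring
    have hTub : (T.map List.sum).sum ≤ c + (2 * (t : ℝ) - 1) * B := by
      rw [hTsplit, ← hprodT]
      linarith
    -- lower bound from the FFD bins
    have htk : ∀ x ∈ (F.map List.sum).take (3 * t - 1), B - w ≤ x :=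
      take_mem_bound (fun j hj _hj' => (fact1 j hj).le)
    have hlb1 : ((3 * t - 1 : ℕ) : ℝ) * (B - w) ≤ ((F.map List.sum).take (3 * t - 1)).sum := by
      have h := sum_ge_mul htk
      have hlen : ((F.map List.sum).take (3 * t - 1)).length = 3 * t - 1 := by
        rw [length_take, length_map]
        omega
      rwa [hlen] at h
    have hc31 : ((3 * t - 1 : ℕ) : ℝ) = 3 * (t : ℝ) - 1 := by
      rw [Nat.cast_sub (by omega : 1 ≤ 3 * t)]
      push_cast
      ring
    have hsplit1 : (F.map List.sum).sum
        = ((F.map List.sum).take (3 * t - 1)).sum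
          + ((F.map List.sum)[3 * t - 1]'(by omega))
          + ((F.map List.sum).drop (3 * t - 1 + 1)).sum := sum_split _ _ (by omega)
    have hdropnil : ((F.map List.sum).drop (3 * t - 1 + 1)) = [] :=
      drop_of_length_le (by omega)
    rw [hdropnil] at hsplit1
    simp only [sum_nil, add_zero] at hsplit1
    have hmul : (0 : ℝ) ≤ (t : ℝ) * (B - 3 * w) :=
      mul_nonneg (by positivity) (by linarith)
    have hmul2 : (0 : ℝ) ≤ ((t : ℝ) - 1) * (B - 3 * w) :=
      mul_nonneg (by
        have : (1 : ℝ) ≤ (t : ℝ) := by exact_mod_cast ht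
        linarith) (by linarith)
    have hEq : items.sum = (F.map List.sum).sum := hsumF
    have hEqT : items.sum = (T.map List.sum).sum := hsumT
    rcases Nat.lt_or_ge i (3 * t - 1) with hilt | hige
    · -- i is not the last bin
      set v := (F.map List.sum).take (3 * t - 1) with hvdef
      have hvlen : v.length = 3 * t - 1 := by
        rw [hvdef, length_take, length_map]
        omega
      have hiv : i < v.length := by omega
      have hvi : v[i]'hiv = ((F.map List.sum)[i]'(by omega)) := getElem_take
      have hsplitv : v.sum = (v.take i).sum + v[i]'hiv + (v.drop (i + 1)).sum :=
        sum_split v i hiv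
      have hlbt : ((v.take i).length : ℝ) * (B - w) ≤ (v.take i).sum :=
        sum_ge_mul (fun x hx => htk x (mem_of_mem_take hx))
      have hlbd : ((v.drop (i + 1)).length : ℝ) * (B - w) ≤ (v.drop (i + 1)).sum :=
        sum_ge_mul (fun x hx => htk x (mem_of_mem_drop hx))
      have hlt1 : (v.take i).length = i := by
        rw [length_take]
        omega
      have hlt2 : (v.drop (i + 1)).length = 3 * t - 2 - i := by
        rw [length_drop]
        omega
      rw [hlt1] at hlbt
      rw [hlt2] at hlbd
      have hprodF : ((i : ℕ) : ℝ) * (B - w) + ((3 * t - 2 - i : ℕ) : ℝ) * (B - w)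
          = (3 * (t : ℝ) - 2) * (B - w) := by
        have h1 : ((3 * t - 2 - i : ℕ) : ℝ) = 3 * (t : ℝ) - 2 - (i : ℝ) := by
          rw [Nat.cast_sub (by omega : i ≤ 3 * t - 2), Nat.cast_sub (by omega : 2 ≤ 3 * t)]
          push_cast
          ring
        rw [h1]
        ring
      have hkey2 : (3 * (t : ℝ) - 2) * (B - w) + w
          = (2 * (t : ℝ) - 1) * B + ((t : ℝ) - 1) * (B - 3 * w) := by ring
      have hsi : ((F.map List.sum)[i]'(by omega)) = (F[i]'hi).sum := hsget i hi3
      have hcstrict : c < ((F.map List.sum)[i]'(by omega)) := by rw [hsi]; exact hcon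
      -- assemble
      rw [hvi] at hsplitv
      linarith [fact2, hw.1]
    · -- i is the last bin
      have hieq : i = 3 * t - 1 := by omega
      have hkey : (3 * (t : ℝ) - 1) * (B - w)
          = (2 * (t : ℝ) - 1) * B + (t : ℝ) * (B - 3 * w) + w := by ring
      subst hieq
      have hsi : ((F.map List.sum)[3 * t - 1]'(by omega)) = (F[3 * t - 1]'hi).sum :=
        hsget (3 * t - 1) (by omega)
      have hcstrict : c < ((F.map List.sum)[3 * t - 1]'(by omega)) := by
        rw [hsi]
        exact hcon
      rw [hc31] at hlb1
      linarith [hw.1]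
  · -- big w : contradiction by counting large items
    exfalso
    set pW : ℝ → Bool := fun y => decide (w ≤ y) with hpW
    set pH : ℝ → Bool := fun y => decide (B - w < y ∧ w ≤ y) with hpH
    -- each optimal bin carries at most 2 units of weight
    have hTbin : ∀ b ∈ T, countP pW b + countP pH b ≤ 2 := by
      intro b hb
      have hpos : ∀ y ∈ b, 0 < y := hTpos b hb
      have hsumb : b.sum ≤ B := hT.2 b hb
      have hWf : ∀ y ∈ b.filter pW, w ≤ y := by
        intro y hy
        have h := (mem_filter.mp hy).2
        simpa [hpW] using h
      have hWsum : (b.filter pW).sum ≤ B := by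
        have hperm := filter_append_perm pW b
        have heq : (b.filter pW).sum + (b.filter (fun x => !pW x)).sum = b.sum := by
          rw [← sum_append]
          exact hperm.sum_eq
        have hnn : 0 ≤ (b.filter (fun x => !pW x)).sum :=
          sum_nonneg (fun y hy => (hpos y (mem_of_mem_filter hy)).le)
        linarith
      have hHW : countP pH b ≤ countP pW b := by
        refine countP_mono_left (fun y _ hy => ?_)
        simp only [hpH, decide_eq_true_eq] at hy
        simp [hpW, hy.2]
      rcases Nat.eq_zero_or_pos (countP pH b) with h0 | hposH
      · rw [h0]
        by_contra hge
        push_neg at hge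
        have h3 : 3 ≤ (b.filter pW).length := by
          rw [← countP_eq_length_filter]
          omega
        have hge3 := sum_ge_mul hWf
        have h3' : (3 : ℝ) ≤ ((b.filter pW).length : ℝ) := by exact_mod_cast h3
        nlinarith [hw.1]
      · obtain ⟨y, hyb, hy⟩ := countP_pos_iff.mp hposH
        simp only [hpH, decide_eq_true_eq] at hy
        suffices hW1 : countP pW b ≤ 1 by omega
        by_contra hge
        push_neg at hge
        have h2 : 2 ≤ (b.filter pW).length := by
          rw [← countP_eq_length_filter]
          omega
        have hyf : y ∈ b.filter pW := mem_filter.mpr ⟨hyb, by simp [hpW, hy.2]⟩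
        have hpermy := perm_cons_erase hyf
        have hsumy : (b.filter pW).sum = y + ((b.filter pW).erase y).sum := by
          rw [hpermy.sum_eq]
          simp
        have helen : 1 ≤ (((b.filter pW).erase y).length : ℝ) := by
          have hl := hpermy.length_eq
          simp only [length_cons] at hl
          have h1 : 1 ≤ ((b.filter pW).erase y).length := by omega
          exact_mod_cast h1
        have herw : ∀ x ∈ (b.filter pW).erase y, w ≤ x := fun x hx =>
          hWf x (List.Sublist.mem hx (erase_sublist (a := y)))
        have hge2 := sum_ge_mul herw
        have hw1 : (1 : ℝ) * w ≤ (((b.filter pW).erase y).length : ℝ) * w :=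
          mul_le_mul_of_nonneg_right helen hw.1.le
        linarith [hy.1]
    -- total over the optimal packing
    have hWt : countP pW items = (T.map (fun b => countP pW b)).sum := by
      rw [← (hT.1).countP_eq pW, countP_flatten]
    have hHt : countP pH items = (T.map (fun b => countP pH b)).sum := by
      rw [← (hT.1).countP_eq pH, countP_flatten]
    have hTcount : countP pW items + countP pH items ≤ 4 * t := by
      have hs2 : (T.map (fun b => countP pW b + countP pH b)).sum ≤ T.length * 2 := by
        have h := sum_le_card_nsmul (T.map fun b => countP pW b + countP pH b) 2 (by
          intro x hx
          obtain ⟨b, hb, rfl⟩ := mem_map.mp hx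
          exact hTbin b hb)
        simpa [smul_eq_mul, length_map, mul_comm] using h
      have hadd := sum_map_add (l := T) (f := fun b => countP pW b) (g := fun b => countP pH b)
      rw [hWt, hHt]
      omega
    -- lower bound from the state when the last bin was opened
    have hmid'count : ∀ c ∈ mid', 2 ≤ countP pW c + countP pH c := by
      intro c hc
      have hcw : ∀ y ∈ c, w ≤ y := hmid'elem c hc
      have hcfull : B < c.sum + w := hfull c hc
      have hcne : c ≠ [] := hmid'ne c hc
      have hWall : countP pW c = c.length :=
        countP_eq_length.mpr (fun y hy => by simp [hpW, hcw y hy])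
      rcases Nat.lt_or_ge c.length 2 with hlen | hlen
      · have h1 : c.length = 1 := by
          have hpos := length_pos_iff.mpr hcne
          omega
        obtain ⟨y, rfl⟩ := length_eq_one_iff.mp h1
        have hyw : w ≤ y := hcw y (mem_cons_self)
        have hyH : B - w < y := by
          simp only [sum_cons, sum_nil, add_zero] at hcfull
          linarith
        have hcW : countP pW [y] = 1 := by simp [hpW, hyw]
        have hcH : countP pH [y] = 1 := by simp [hpH, hyw, hyH]
        omega
      · omega
    have hmidperm : (mid' ++ [[w]]).flatten.Perm (l.take k₀) := by
      have h := foldl_flatten_perm B (l.take k₀) []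
      rw [← firstFit_eq_foldl, hstep, hmid] at h
      simpa using h
    have hcountTake : ∀ p : ℝ → Bool,
        countP p (l.take k₀) = (mid'.map (fun c => countP p c)).sum + countP p [w] := by
      intro p
      rw [← hmidperm.countP_eq p, countP_flatten, map_append, sum_append]
      simp
    have hcWw : countP pW [w] = 1 := by simp [hpW]
    have hmidlb : 2 * (3 * t - 1) + 1 ≤ countP pW (l.take k₀) + countP pH (l.take k₀) := by
      have hs2 : mid'.length * 2 ≤ (mid'.map (fun c => countP pW c + countP pH c)).sum := by
        have h := card_nsmul_le_sum (mid'.map fun c => countP pW c + countP pH c) 2 (by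
          intro x hx
          obtain ⟨c, hc, rfl⟩ := mem_map.mp hx
          exact hmid'count c hc)
        simpa [smul_eq_mul, length_map, mul_comm] using h
      have hadd := sum_map_add (l := mid') (f := fun c => countP pW c) (g := fun c => countP pH c)
      rw [hcountTake pW, hcountTake pH, hcWw]
      omega
    have hsubW : countP pW (l.take k₀) ≤ countP pW items := by
      calc countP pW (l.take k₀) ≤ countP pW l := (take_sublist _ _).countP_le
        _ = countP pW items := hlp.countP_eq pW
    have hsubH : countP pH (l.take k₀) ≤ countP pH items := by
      calc countP pH (l.take k₀) ≤ countP pH l := (take_sublist _ _).countP_le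
        _ = countP pH items := hlp.countP_eq pH
    omega
end

section
/- Let G^b be a bipartite graph with parts V_left and V_right, where vertices correspond to intervals crossing a station's arrival time t^A (left) and departure time t^D but not t^A (right). Suppose in an optimal solution of size OPT, each feasible assignment contains at most one interval of V_left and at most one interval of V_right, and whenever an assignment contains one interval from each part, the corresponding pair forms an edge of G^b; distinct assignments give vertex-disjoint edges. Let x be the size of a maximum matching of G^b and let z = |V_left ∪ V_right| − x. Then z ≤ OPT. -/
/-- bipartite graph with parts `L`, `R` and adjacency `Adj`;
`x` is the maximum matching size.  An optimal solution of size `OPT` covers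
each vertex of `L ∪ R` exactly once, each assignment contains at most one
vertex of `L` and at most one of `R`, and an assignment containing one vertex
from each part uses an edge.  Then `z = |L ∪ R| − x ≤ OPT`. -/
theorem stmt11 {α : Type*} [DecidableEq α]
    (L R : Finset α) (hLR : Disjoint L R)
    (Adj : α → α → Prop)
    (x : ℕ)
    (hx : IsGreatest {c : ℕ | ∃ M : Finset (α × α),
        M.card = c ∧ (∀ e ∈ M, e.1 ∈ L ∧ e.2 ∈ R ∧ Adj e.1 e.2) ∧
        (∀ e ∈ M, ∀ f ∈ M, e ≠ f → e.1 ≠ f.1 ∧ e.2 ≠ f.2)} x)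
    (OPT : ℕ) (D : Fin OPT → Finset α)
    (hcover : ∀ v ∈ L ∪ R, ∃! i, v ∈ D i)
    (hL1 : ∀ i, (D i ∩ L).card ≤ 1)
    (hR1 : ∀ i, (D i ∩ R).card ≤ 1)
    (hAdj : ∀ i, ∀ u ∈ D i ∩ L, ∀ v ∈ D i ∩ R, Adj u v) :
    (L ∪ R).card - x ≤ OPT := by
  classical
  -- uniqueness of covering index
  have huniq : ∀ v ∈ L ∪ R, ∀ i j, v ∈ D i → v ∈ D j → i = j := by
    intro v hv i j hi hj
    obtain ⟨k, _, hk⟩ := hcover v hv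
    rw [hk i hi, hk j hj]
  -- indices whose assignment meets both parts
  set T : Finset (Fin OPT) := Finset.univ.filter
    (fun i => (D i ∩ L).Nonempty ∧ (D i ∩ R).Nonempty) with hTdef
  have hTmem : ∀ i ∈ T, (D i ∩ L).Nonempty ∧ (D i ∩ R).Nonempty := by
    intro i hi; simpa [hTdef] using hi
  have key : ∀ i ∈ T, ∃ q : α × α, q.1 ∈ D i ∩ L ∧ q.2 ∈ D i ∩ R := by
    intro i hi
    obtain ⟨⟨u, hu⟩, ⟨v, hv⟩⟩ := hTmem i hi
    exact ⟨(u, v), hu, hv⟩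
  choose q hq1 hq2 using key
  -- the chosen pairs form a matching, hence |T| ≤ x
  have hTx : T.card ≤ x := by
    apply hx.2
    refine ⟨T.attach.image (fun i => q i.1 i.2), ?_, ?_, ?_⟩
    · rw [Finset.card_image_of_injOn, Finset.card_attach]
      intro i _ j _ hij
      have h1 : (q i.1 i.2).1 ∈ D i.1 := (Finset.mem_inter.1 (hq1 i.1 i.2)).1
      have h2 : (q i.1 i.2).1 ∈ L := (Finset.mem_inter.1 (hq1 i.1 i.2)).2
      have hij' : q i.1 i.2 = q j.1 j.2 := hij
      have h3 : (q i.1 i.2).1 ∈ D j.1 := by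
        rw [hij']; exact (Finset.mem_inter.1 (hq1 j.1 j.2)).1
      have := huniq _ (Finset.mem_union_left _ h2) i.1 j.1 h1 h3
      exact Subtype.ext this
    · intro e he
      obtain ⟨i, _, rfl⟩ := Finset.mem_image.1 he
      refine ⟨(Finset.mem_inter.1 (hq1 i.1 i.2)).2,
        (Finset.mem_inter.1 (hq2 i.1 i.2)).2, ?_⟩
      exact hAdj i.1 _ (hq1 i.1 i.2) _ (hq2 i.1 i.2)
    · intro e he f hf hef
      obtain ⟨i, _, rfl⟩ := Finset.mem_image.1 he
      obtain ⟨j, _, rfl⟩ := Finset.mem_image.1 hf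
      have hij : (i : Fin OPT) ≠ j := by
        rintro h
        exact hef (by rw [Subtype.ext h])
      constructor
      · intro h
        apply hij
        exact huniq _ (Finset.mem_union_left _ (Finset.mem_inter.1 (hq1 i.1 i.2)).2)
          i.1 j.1 (Finset.mem_inter.1 (hq1 i.1 i.2)).1
          (h ▸ (Finset.mem_inter.1 (hq1 j.1 j.2)).1)
      · intro h
        apply hij
        exact huniq _ (Finset.mem_union_right _ (Finset.mem_inter.1 (hq2 i.1 i.2)).2)
          i.1 j.1 (Finset.mem_inter.1 (hq2 i.1 i.2)).1
          (h ▸ (Finset.mem_inter.1 (hq2 j.1 j.2)).1)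
  -- counting: |L ∪ R| ≤ OPT + |T|
  have hcount : (L ∪ R).card ≤ OPT + T.card := by
    have hsplit : L ∪ R = Finset.univ.biUnion (fun i => (L ∪ R) ∩ D i) := by
      ext v
      simp only [Finset.mem_biUnion, Finset.mem_univ, true_and, Finset.mem_inter]
      constructor
      · intro hv
        obtain ⟨i, hi, _⟩ := hcover v hv
        exact ⟨i, hv, hi⟩
      · rintro ⟨i, hv, _⟩; exact hv
    have hdisj : ((Finset.univ : Finset (Fin OPT)) : Set (Fin OPT)).PairwiseDisjoint
        (fun i => (L ∪ R) ∩ D i) := by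
      intro i _ j _ hij
      refine Finset.disjoint_left.2 ?_
      intro v hvi hvj
      exact hij (huniq v (Finset.mem_inter.1 hvi).1 i j
        (Finset.mem_inter.1 hvi).2 (Finset.mem_inter.1 hvj).2)
    have hcard : (L ∪ R).card = ∑ i, ((L ∪ R) ∩ D i).card := by
      conv_lhs => rw [hsplit]
      rw [Finset.card_biUnion]
      intro i hi j hj hij
      exact hdisj hi hj hij
    have hbound : ∀ i, ((L ∪ R) ∩ D i).card ≤ 1 + (if i ∈ T then 1 else 0) := by
      intro i
      have heq : (L ∪ R) ∩ D i = (D i ∩ L) ∪ (D i ∩ R) := by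
        ext v
        simp only [Finset.mem_inter, Finset.mem_union]
        tauto
      have hc : ((L ∪ R) ∩ D i).card ≤ (D i ∩ L).card + (D i ∩ R).card := by
        rw [heq]; exact Finset.card_union_le _ _
      by_cases hi : i ∈ T
      · simp only [hi, if_true]
        exact hc.trans (Nat.add_le_add (hL1 i) (hR1 i))
      · simp only [hi, if_false]
        have : ¬((D i ∩ L).Nonempty ∧ (D i ∩ R).Nonempty) := by
          simpa [hTdef] using hi
        rcases not_and_or.1 this with h | h
        · have h0 : (D i ∩ L).card = 0 := by
            simp [Finset.not_nonempty_iff_eq_empty.1 h]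
          have := hR1 i
          omega
        · have h0 : (D i ∩ R).card = 0 := by
            simp [Finset.not_nonempty_iff_eq_empty.1 h]
          have := hL1 i
          omega
    calc (L ∪ R).card = ∑ i, ((L ∪ R) ∩ D i).card := hcard
      _ ≤ ∑ i, (1 + (if i ∈ T then 1 else 0)) :=
          Finset.sum_le_sum (fun i _ => hbound i)
      _ = OPT + T.card := by
          rw [Finset.sum_add_distrib]
          congr 1
          · simp
          · rw [Finset.sum_ite_mem, Finset.univ_inter, Finset.sum_const,
              smul_eq_mul, mul_one]
  omega
end

section
/- Let G be a bipartite graph whose parts L and R correspond to two families of intervals all containing a common point p_L and p_R respectively (p_L ≠ p_R), with an edge between u ∈ L and v ∈ R iff the corresponding intervals are disjoint and cost(u) + cost(v) ≤ B. For any matching M of G, assigning each matched pair to one drone and each unmatched vertex to its own drone yields |L| + |R| − |M| drones, and each drone's assignment is feasible (pairwise disjoint intervals with total cost ≤ B). -/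
/-- `L` and `R` are families of intervals all containing `pL`
resp. `pR`; a matching `M` of the bipartite graph (edges = disjoint pairs with
cost sum ≤ B) yields a feasible solution using `|L| + |R| − |M|` drones:
matched pairs share a drone and every other vertex gets its own drone, and
every drone's assignment consists of pairwise disjoint intervals of total cost
at most `B`. -/
theorem stmt18 {α : Type*} [DecidableEq α] (B : ℝ) (lo up cost : α → ℝ)
    (L R : Finset α) (hLR : Disjoint L R)
    (pL pR : ℝ) (hp : pL ≠ pR)
    (hL : ∀ v ∈ L, pL ∈ Set.Icc (lo v) (up v))
    (hR : ∀ v ∈ R, pR ∈ Set.Icc (lo v) (up v))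
    (M : Finset (α × α))
    (hM1 : ∀ e ∈ M, e.1 ∈ L ∧ e.2 ∈ R ∧
      Disjoint (Set.Icc (lo e.1) (up e.1)) (Set.Icc (lo e.2) (up e.2)) ∧
      cost e.1 + cost e.2 ≤ B)
    (hM2 : ∀ e ∈ M, ∀ f ∈ M, e ≠ f → e.1 ≠ f.1 ∧ e.2 ≠ f.2)
    (hcost : ∀ v ∈ L ∪ R, 0 < cost v ∧ cost v ≤ B) :
    ∃ D : Fin (L.card + R.card - M.card) → Finset α,
      (∀ e ∈ M, ∃ i, e.1 ∈ D i ∧ e.2 ∈ D i) ∧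
      (∀ v ∈ L ∪ R, ∃! i, v ∈ D i) ∧
      ∀ i, D i ⊆ L ∪ R ∧ (D i).sum cost ≤ B ∧
        ∀ u ∈ D i, ∀ v ∈ D i, u ≠ v →
          Disjoint (Set.Icc (lo u) (up u)) (Set.Icc (lo v) (up v)) := by
  classical
  have hfst : ∀ e ∈ M, e.1 ∈ L := fun e he => (hM1 e he).1
  have hsnd : ∀ e ∈ M, e.2 ∈ R := fun e he => (hM1 e he).2.1
  have hLnR : ∀ u ∈ L, u ∉ R := fun u hu => Finset.disjoint_left.mp hLR hu
  have hne12 : ∀ e ∈ M, e.1 ≠ e.2 := by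
    intro e he h
    exact hLnR e.1 (hfst e he) (h ▸ hsnd e he)
  set matched : Finset α := M.image Prod.fst ∪ M.image Prod.snd with hmatched
  set V1 : Finset (Finset α) := M.image (fun e => ({e.1, e.2} : Finset α)) with hV1
  set V2 : Finset (Finset α) :=
    ((L ∪ R) \ matched).image (fun v => ({v} : Finset α)) with hV2
  set S : Finset (Finset α) := V1 ∪ V2 with hS
  -- cardinalities
  have hinj1 : Set.InjOn Prod.fst (M : Set (α × α)) := by
    intro e he f hf h
    by_contra hef
    exact (hM2 e he f hf hef).1 h
  have hinj2 : Set.InjOn Prod.snd (M : Set (α × α)) := by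
    intro e he f hf h
    by_contra hef
    exact (hM2 e he f hf hef).2 h
  have hmsub : matched ⊆ L ∪ R := by
    intro v hv
    rw [hmatched, Finset.mem_union] at hv
    rcases hv with hv | hv <;> rw [Finset.mem_image] at hv <;>
      obtain ⟨e, he, rfl⟩ := hv
    · exact Finset.mem_union_left _ (hfst e he)
    · exact Finset.mem_union_right _ (hsnd e he)
  have hmcard : matched.card = 2 * M.card := by
    rw [hmatched, Finset.card_union_of_disjoint, Finset.card_image_of_injOn hinj1,
      Finset.card_image_of_injOn hinj2]
    · ring
    · rw [Finset.disjoint_left]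
      intro v hv1 hv2
      rw [Finset.mem_image] at hv1 hv2
      obtain ⟨e, he, rfl⟩ := hv1
      obtain ⟨f, hf, hvf⟩ := hv2
      exact hLnR e.1 (hfst e he) (hvf ▸ hsnd f hf)
  have hV1card : V1.card = M.card := by
    rw [hV1]
    apply Finset.card_image_of_injOn
    intro e he f hf h
    by_contra hef
    have h' : ({e.1, e.2} : Finset α) = {f.1, f.2} := h
    have h1 : e.1 ∈ ({f.1, f.2} : Finset α) := by
      rw [← h']; simp
    rw [Finset.mem_insert, Finset.mem_singleton] at h1
    rcases h1 with h1 | h1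
    · exact (hM2 e he f hf hef).1 h1
    · exact hLnR e.1 (hfst e he) (h1 ▸ hsnd f hf)
  have hV2card : V2.card = L.card + R.card - 2 * M.card := by
    rw [hV2, Finset.card_image_of_injOn (fun a _ b _ h => by
      simpa using h),
      Finset.card_sdiff_of_subset hmsub, Finset.card_union_of_disjoint hLR, hmcard]
  have hdisj12 : Disjoint V1 V2 := by
    rw [Finset.disjoint_left]
    intro s hs1 hs2
    rw [hV1, Finset.mem_image] at hs1
    rw [hV2, Finset.mem_image] at hs2
    obtain ⟨e, he, rfl⟩ := hs1
    obtain ⟨v, hv, hsv⟩ := hs2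
    have hc2 : ({e.1, e.2} : Finset α).card = 2 :=
      Finset.card_pair (hne12 e he)
    rw [← hsv] at hc2
    simp at hc2
  have hmle : 2 * M.card ≤ L.card + R.card := by
    have := Finset.card_le_card hmsub
    rwa [hmcard, Finset.card_union_of_disjoint hLR] at this
  have hScard : L.card + R.card - M.card = S.card := by
    rw [hS, Finset.card_union_of_disjoint hdisj12, hV1card, hV2card]
    omega
  -- the indexing
  set E := S.equivFin with hE
  have hcast : ∀ j : Fin S.card, Fin.cast hScard (Fin.cast hScard.symm j) = j :=
    fun j => by ext; simp
  have hcast' : ∀ j : Fin (L.card + R.card - M.card),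
      Fin.cast hScard.symm (Fin.cast hScard j) = j := fun j => by ext; simp
  refine ⟨fun i => (E.symm (Fin.cast hScard i) : Finset α), ?_, ?_, ?_⟩
  · -- matched pairs together
    intro e he
    have hmem : ({e.1, e.2} : Finset α) ∈ S := by
      rw [hS, Finset.mem_union, hV1, Finset.mem_image]
      exact Or.inl ⟨e, he, rfl⟩
    refine ⟨Fin.cast hScard.symm (E ⟨_, hmem⟩), ?_⟩
    show e.1 ∈ (E.symm (Fin.cast hScard (Fin.cast hScard.symm (E ⟨_, hmem⟩))) : Finset α) ∧
      e.2 ∈ (E.symm (Fin.cast hScard (Fin.cast hScard.symm (E ⟨_, hmem⟩))) : Finset α)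
    rw [hcast, Equiv.symm_apply_apply]
    simp
  · -- unique drone for each vertex
    intro v hv
    -- first: unique s ∈ S with v ∈ s
    have huniq : ∃! s : Finset α, s ∈ S ∧ v ∈ s := by
      by_cases hvm : v ∈ matched
      · rw [hmatched, Finset.mem_union] at hvm
        have key : ∃ e ∈ M, v = e.1 ∨ v = e.2 := by
          rcases hvm with h | h <;> rw [Finset.mem_image] at h <;>
            obtain ⟨e, he, rfl⟩ := h
          · exact ⟨e, he, Or.inl rfl⟩
          · exact ⟨e, he, Or.inr rfl⟩
        obtain ⟨e, he, hve⟩ := key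
        refine ⟨{e.1, e.2}, ⟨?_, ?_⟩, ?_⟩
        · rw [hS, Finset.mem_union, hV1, Finset.mem_image]
          exact Or.inl ⟨e, he, rfl⟩
        · rcases hve with rfl | rfl <;> simp
        · rintro s ⟨hsS, hvs⟩
          rw [hS, Finset.mem_union] at hsS
          rcases hsS with hsS | hsS
          · rw [hV1, Finset.mem_image] at hsS
            obtain ⟨f, hf, rfl⟩ := hsS
            rw [Finset.mem_insert, Finset.mem_singleton] at hvs
            by_cases hef : e = f
            · rw [hef]
            · exfalso
              have h2 := hM2 e he f hf hef
              rcases hve with rfl | rfl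
              · rcases hvs with h | h
                · exact h2.1 h
                · exact hLnR e.1 (hfst e he) (h ▸ hsnd f hf)
              · rcases hvs with h | h
                · exact hLnR f.1 (hfst f hf) (h ▸ hsnd e he)
                · exact h2.2 h
          · exfalso
            rw [hV2, Finset.mem_image] at hsS
            obtain ⟨w, hw, rfl⟩ := hsS
            rw [Finset.mem_singleton] at hvs
            rw [Finset.mem_sdiff] at hw
            apply hw.2
            rw [hmatched, Finset.mem_union]
            rcases hve with rfl | rfl
            · exact Or.inl (Finset.mem_image.mpr ⟨e, he, hvs⟩)
            · exact Or.inr (Finset.mem_image.mpr ⟨e, he, hvs⟩)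
      · refine ⟨{v}, ⟨?_, by simp⟩, ?_⟩
        · rw [hS, Finset.mem_union]
          exact Or.inr (Finset.mem_image.mpr ⟨v, Finset.mem_sdiff.mpr ⟨hv, hvm⟩, rfl⟩)
        · rintro s ⟨hsS, hvs⟩
          rw [hS, Finset.mem_union] at hsS
          rcases hsS with hsS | hsS
          · exfalso
            rw [hV1, Finset.mem_image] at hsS
            obtain ⟨e, he, rfl⟩ := hsS
            rw [Finset.mem_insert, Finset.mem_singleton] at hvs
            apply hvm
            rw [hmatched, Finset.mem_union]
            rcases hvs with rfl | rfl
            · exact Or.inl (Finset.mem_image.mpr ⟨e, he, rfl⟩)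
            · exact Or.inr (Finset.mem_image.mpr ⟨e, he, rfl⟩)
          · rw [hV2, Finset.mem_image] at hsS
            obtain ⟨w, _, rfl⟩ := hsS
            rw [Finset.mem_singleton] at hvs
            rw [hvs]
    obtain ⟨s, ⟨hsS, hvs⟩, hsu⟩ := huniq
    refine ⟨Fin.cast hScard.symm (E ⟨s, hsS⟩), ?_, ?_⟩
    · show v ∈ (E.symm (Fin.cast hScard (Fin.cast hScard.symm (E ⟨s, hsS⟩))) : Finset α)
      rw [hcast, Equiv.symm_apply_apply]
      exact hvs
    · intro j hj
      have hj' : v ∈ (E.symm (Fin.cast hScard j) : Finset α) := hj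
      have hDj := (E.symm (Fin.cast hScard j)).2
      have := hsu _ ⟨hDj, hj'⟩
      have h2 : E.symm (Fin.cast hScard j) = ⟨s, hsS⟩ := Subtype.ext this
      have h3 : Fin.cast hScard j = E ⟨s, hsS⟩ := by
        rw [← h2, Equiv.apply_symm_apply]
      rw [← h3, hcast']
  · -- feasibility
    intro i
    suffices hfeas : ∀ s ∈ S, s ⊆ L ∪ R ∧ s.sum cost ≤ B ∧
        ∀ u ∈ s, ∀ v ∈ s, u ≠ v →
          Disjoint (Set.Icc (lo u) (up u)) (Set.Icc (lo v) (up v)) by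
      exact hfeas _ (E.symm (Fin.cast hScard i)).2
    intro s hsS
    rw [hS, Finset.mem_union] at hsS
    rcases hsS with h | h
    · rw [hV1, Finset.mem_image] at h
      obtain ⟨e, he, hse⟩ := h
      refine ⟨?_, ?_, ?_⟩
      · rw [← hse]
        intro u hu
        rw [Finset.mem_insert, Finset.mem_singleton] at hu
        rcases hu with rfl | rfl
        · exact Finset.mem_union_left _ (hfst e he)
        · exact Finset.mem_union_right _ (hsnd e he)
      · rw [← hse, Finset.sum_pair (hne12 e he)]
        exact (hM1 e he).2.2.2
      · intro u hu v hv huv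
        rw [← hse, Finset.mem_insert, Finset.mem_singleton] at hu hv
        rcases hu with rfl | rfl <;> rcases hv with rfl | rfl
        · exact absurd rfl huv
        · exact (hM1 e he).2.2.1
        · exact (hM1 e he).2.2.1.symm
        · exact absurd rfl huv
    · rw [hV2, Finset.mem_image] at h
      obtain ⟨v, hv, hsv⟩ := h
      rw [Finset.mem_sdiff] at hv
      refine ⟨?_, ?_, ?_⟩
      · rw [← hsv]
        intro u hu
        rw [Finset.mem_singleton] at hu
        exact hu ▸ hv.1
      · rw [← hsv, Finset.sum_singleton]
        exact (hcost v hv.1).2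
      · intro u hu w hw huw
        rw [← hsv, Finset.mem_singleton] at hu hw
        exact absurd (hu.trans hw.symm) huw
end
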